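/- arXiv:1907.00560 — 9 statements merged into one kernel-verified Lean document; each statement's English description precedes it below -/
import Mathlib

section
/- Let n ∈ ℕ, let A ⊆ {0,1,...,n}, and let x ∈ {0,1}^n. Then −0.5 + ∑_{i∈A} Δ_i(x) > 0 if |x| ∈ A, and −0.5 + ∑_{i∈A} Δ_i(x) < 0 if |x| ∉ A. Equivalently, the symmetric function f_A satisfies f_A(x) = sign(−0.5 + ∑_{i∈A} Δ_i(x)) for all x ∈ {0,1}^n. -/
/-- The sigmoid function σ(ξ) = 1/(1+exp(−ξ)). -/
noncomputable def sigmoid (ξ : ℝ) : ℝ := 1 / (1 + Real.exp (-ξ))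

/-- The Hamming weight |x| of x ∈ {0,1}^n. -/
def hw {n : ℕ} (x : Fin n → Bool) : ℕ := (Finset.univ.filter (fun i => x i)).card

/-- Δ_i(x) = σ(5(|x| − i + 0.5)) + σ(5(i + 0.5 − |x|)) − 1, as a function of k = |x|. -/
noncomputable def Δ (i k : ℕ) : ℝ :=
  sigmoid (5 * ((k : ℝ) - (i : ℝ) + 0.5)) + sigmoid (5 * ((i : ℝ) + 0.5 - (k : ℝ))) - 1

/-- The symmetric function f_A : f_A(x) = 1 if |x| ∈ A, and −1 otherwise. -/
def fA {n : ℕ} (A : Finset ℕ) (x : Fin n → Bool) : ℝ := if hw x ∈ A then 1 else -1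

lemma sigmoid_pos (ξ : ℝ) : 0 < sigmoid ξ := by unfold sigmoid; positivity

lemma sigmoid_le_one (ξ : ℝ) : sigmoid ξ ≤ 1 := by
  unfold sigmoid
  rw [div_le_one (by positivity)]
  linarith [Real.exp_pos (-ξ)]

lemma sigmoid_le_exp (ξ : ℝ) : sigmoid ξ ≤ Real.exp ξ := by
  unfold sigmoid
  rw [div_le_iff₀ (by positivity)]
  have h2 : Real.exp ξ * Real.exp (-ξ) = 1 := by rw [← Real.exp_add]; simp
  nlinarith [Real.exp_pos ξ]

lemma Δ_pos (i k : ℕ) : 0 < Δ i k := by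
  unfold Δ sigmoid
  set u := Real.exp (-(5 * ((k : ℝ) - (i : ℝ) + 0.5))) with hu
  set v := Real.exp (-(5 * ((i : ℝ) + 0.5 - (k : ℝ)))) with hv
  have hup : 0 < u := Real.exp_pos _
  have hvp : 0 < v := Real.exp_pos _
  have huv : u * v = Real.exp (-5) := by rw [hu, hv, ← Real.exp_add]; ring_nf
  have h5 : Real.exp (-5) < 1 := by
    rw [Real.exp_lt_one_iff]; norm_num
  have key : 1 / (1 + u) + 1 / (1 + v) - 1 = (1 - u * v) / ((1 + u) * (1 + v)) := by
    field_simp; ring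
  rw [key]
  apply div_pos (by linarith) (by positivity)

lemma Δ_self (k : ℕ) : (1:ℝ)/2 < Δ k k := by
  unfold Δ sigmoid
  have h1 : (k : ℝ) - (k : ℝ) + 0.5 = 0.5 := by ring
  have h2 : (k : ℝ) + 0.5 - (k : ℝ) = 0.5 := by ring
  rw [h1, h2]
  have hE : (3.5:ℝ) ≤ Real.exp 2.5 := by linarith [Real.add_one_le_exp (2.5:ℝ)]
  have hp : (0:ℝ) < Real.exp (-(5 * 0.5)) := Real.exp_pos _
  have hmul : Real.exp (-(5 * (0.5:ℝ))) * Real.exp 2.5 = 1 := by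
    rw [← Real.exp_add]; norm_num
  set u := Real.exp (-(5 * (0.5:ℝ)))
  have hu : u ≤ 1/3.5 := by nlinarith
  have : (3:ℝ)/4 < 1 / (1 + u) := by
    rw [lt_div_iff₀ (by positivity)]; nlinarith
  linarith

lemma Δ_le (i k : ℕ) (h : i ≠ k) :
    Δ i k ≤ Real.exp 2.5 * Real.exp (-5) ^ (if i < k then k - i else i - k) := by
  rcases lt_or_gt_of_ne h with hik | hik
  · rw [if_pos hik]
    have hd : ((k - i : ℕ) : ℝ) = (k : ℝ) - i := by
      rw [Nat.cast_sub hik.le]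
    have hb : sigmoid (5 * ((i : ℝ) + 0.5 - (k : ℝ))) ≤
        Real.exp 2.5 * Real.exp (-5) ^ (k - i) := by
      calc sigmoid (5 * ((i : ℝ) + 0.5 - (k : ℝ))) ≤ Real.exp (5 * ((i : ℝ) + 0.5 - (k : ℝ))) :=
            sigmoid_le_exp _
        _ = Real.exp 2.5 * Real.exp (-5) ^ (k - i) := by
            rw [← Real.exp_nat_mul, ← Real.exp_add, hd]; ring_nf
    have := sigmoid_le_one (5 * ((k : ℝ) - (i : ℝ) + 0.5))
    unfold Δ; linarith
  · rw [if_neg (by omega)]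
    have hd : ((i - k : ℕ) : ℝ) = (i : ℝ) - k := by
      rw [Nat.cast_sub hik.le]
    have hb : sigmoid (5 * ((k : ℝ) - (i : ℝ) + 0.5)) ≤
        Real.exp 2.5 * Real.exp (-5) ^ (i - k) := by
      calc sigmoid (5 * ((k : ℝ) - (i : ℝ) + 0.5)) ≤ Real.exp (5 * ((k : ℝ) - (i : ℝ) + 0.5)) :=
            sigmoid_le_exp _
        _ = Real.exp 2.5 * Real.exp (-5) ^ (i - k) := by
            rw [← Real.exp_nat_mul, ← Real.exp_add, hd]; ring_nf
    have := sigmoid_le_one (5 * ((i : ℝ) + 0.5 - (k : ℝ)))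
    unfold Δ; linarith

lemma geom_bound (r : ℝ) (h0 : 0 ≤ r) (h1 : r < 1) (n : ℕ) :
    ∑ j ∈ Finset.Icc 1 n, r ^ j ≤ r / (1 - r) := by
  have h : Finset.Icc 1 n = Finset.Ico 1 (n + 1) := by
    rw [Nat.Icc_eq_range', Nat.Ico_eq_range']
  rw [h, Finset.sum_Ico_eq_sum_range]
  simp only [Nat.add_sub_cancel]
  have : ∀ i ∈ Finset.range n, r ^ (1 + i) = r * r ^ i := by
    intro i _; rw [pow_add, pow_one]
  rw [Finset.sum_congr rfl this, ← Finset.mul_sum]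
  rw [div_eq_mul_inv]
  apply mul_le_mul_of_nonneg_left _ h0
  have hg := geom_sum_mul r n
  rw [inv_eq_one_div, le_div_iff₀ (by linarith)]
  nlinarith [pow_nonneg h0 n]

lemma sum_pow_le (n : ℕ) (B : Finset ℕ) (g : ℕ → ℕ) (hinj : Set.InjOn g B)
    (hsub : ∀ i ∈ B, g i ∈ Finset.Icc 1 n) (r : ℝ) (h0 : 0 ≤ r) :
    ∑ i ∈ B, r ^ g i ≤ ∑ j ∈ Finset.Icc 1 n, r ^ j := by
  rw [← Finset.sum_image (fun a ha b hb h => hinj ha hb h)]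
  apply Finset.sum_le_sum_of_subset_of_nonneg
  · intro j hj
    obtain ⟨i, hi, rfl⟩ := Finset.mem_image.mp hj
    exact hsub i hi
  · intro j _ _; positivity

lemma sum_lt_half (n : ℕ) (A : Finset ℕ) (hA : A ⊆ Finset.range (n + 1))
    (k : ℕ) (hk : k ≤ n) (hkA : k ∉ A) : ∑ i ∈ A, Δ i k < 1/2 := by
  set r := Real.exp (-5) with hrdef
  set E := Real.exp 2.5 with hEdef
  have hr0 : 0 < r := Real.exp_pos _
  have hr1 : r < 1 := by rw [hrdef, Real.exp_lt_one_iff]; norm_num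
  have hE0 : 0 < E := Real.exp_pos _
  -- step 1: pointwise bound
  have step1 : ∑ i ∈ A, Δ i k ≤
      ∑ i ∈ A, E * r ^ (if i < k then k - i else i - k) := by
    apply Finset.sum_le_sum
    intro i hi
    exact Δ_le i k (by rintro rfl; exact hkA hi)
  -- step 2: split and bound by geometric sums
  have step2 : ∑ i ∈ A, r ^ (if i < k then k - i else i - k) ≤
      2 * (∑ j ∈ Finset.Icc 1 n, r ^ j) := by
    rw [← Finset.sum_filter_add_sum_filter_not A (fun i => i < k)]
    have e1 : ∑ i ∈ A.filter (fun i => i < k), r ^ (if i < k then k - i else i - k)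
        = ∑ i ∈ A.filter (fun i => i < k), r ^ (k - i) := by
      apply Finset.sum_congr rfl
      intro i hi
      rw [if_pos (Finset.mem_filter.mp hi).2]
    have e2 : ∑ i ∈ A.filter (fun i => ¬ i < k), r ^ (if i < k then k - i else i - k)
        = ∑ i ∈ A.filter (fun i => ¬ i < k), r ^ (i - k) := by
      apply Finset.sum_congr rfl
      intro i hi
      rw [if_neg (Finset.mem_filter.mp hi).2]
    rw [e1, e2]
    have b1 : ∑ i ∈ A.filter (fun i => i < k), r ^ (k - i) ≤
        ∑ j ∈ Finset.Icc 1 n, r ^ j := by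
      apply sum_pow_le n _ (fun i => k - i) _ _ r hr0.le
      · intro a ha b hb hab
        simp only [Finset.coe_filter, Set.mem_setOf_eq] at ha hb
        simp only at hab
        omega
      · intro i hi
        have := (Finset.mem_filter.mp hi).2
        simp only [Finset.mem_Icc]; omega
    have b2 : ∑ i ∈ A.filter (fun i => ¬ i < k), r ^ (i - k) ≤
        ∑ j ∈ Finset.Icc 1 n, r ^ j := by
      apply sum_pow_le n _ (fun i => i - k) _ _ r hr0.le
      · intro a ha b hb hab
        simp only [Finset.coe_filter, Set.mem_setOf_eq] at ha hb
        simp only at hab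
        omega
      · intro i hi
        obtain ⟨hiA, hik⟩ := Finset.mem_filter.mp hi
        have hin : i < n + 1 := Finset.mem_range.mp (hA hiA)
        have : i ≠ k := by rintro rfl; exact hkA hiA
        simp only [Finset.mem_Icc]; omega
    linarith
  have geom := geom_bound r hr0.le hr1 n
  -- numeric facts
  have hE5 : (5.0625:ℝ) ≤ E := by
    have h125 : (2.25:ℝ) ≤ Real.exp 1.25 := by linarith [Real.add_one_le_exp (1.25:ℝ)]
    have hsq : E = Real.exp 1.25 * Real.exp 1.25 := by
      rw [hEdef, ← Real.exp_add]; norm_num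
    nlinarith
  have hrE : r * (E * E) = 1 := by
    rw [hrdef, hEdef, ← Real.exp_add, ← Real.exp_add]; norm_num
  have hr6 : r ≤ 1/6 := by
    have h5 : (6:ℝ) ≤ Real.exp 5 := by linarith [Real.add_one_le_exp (5:ℝ)]
    have hm : r * Real.exp 5 = 1 := by rw [hrdef, ← Real.exp_add]; norm_num
    nlinarith [Real.exp_pos (5:ℝ)]
  have hdiv : r / (1 - r) ≤ 6/5 * r := by
    rw [div_le_iff₀ (by linarith)]; nlinarith
  have hEr : E * r ≤ 1/5 := by nlinarith [mul_pos hE0 hr0]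
  -- combine
  have hsum2 : ∑ i ∈ A, E * r ^ (if i < k then k - i else i - k)
      = E * ∑ i ∈ A, r ^ (if i < k then k - i else i - k) := by
    rw [Finset.mul_sum]
  have chain : E * ∑ i ∈ A, r ^ (if i < k then k - i else i - k) ≤ E * (2 * (6/5 * r)) := by
    apply mul_le_mul_of_nonneg_left _ hE0.le
    linarith
  have : E * (2 * (6/5 * r)) = 12/5 * (E * r) := by ring
  calc ∑ i ∈ A, Δ i k ≤ E * ∑ i ∈ A, r ^ (if i < k then k - i else i - k) := by
        rw [← hsum2]; exact step1
    _ ≤ E * (2 * (6/5 * r)) := chain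
    _ = 12/5 * (E * r) := by ring
    _ ≤ 12/5 * (1/5) := by linarith
    _ < 1/2 := by norm_num

lemma half_lt_sum (A : Finset ℕ) (k : ℕ) (hkA : k ∈ A) : 1/2 < ∑ i ∈ A, Δ i k := by
  rw [← Finset.add_sum_erase A _ hkA]
  have h1 : (0:ℝ) ≤ ∑ i ∈ A.erase k, Δ i k :=
    Finset.sum_nonneg fun i _ => (Δ_pos i k).le
  linarith [Δ_self k]

theorem stmt0 (n : ℕ) (A : Finset ℕ) (hA : A ⊆ Finset.range (n + 1))
    (x : Fin n → Bool) :
    (hw x ∈ A → 0 < -0.5 + ∑ i ∈ A, Δ i (hw x)) ∧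
    (hw x ∉ A → -0.5 + ∑ i ∈ A, Δ i (hw x) < 0) ∧
    fA A x = Real.sign (-0.5 + ∑ i ∈ A, Δ i (hw x)) := by
  have hk : hw x ≤ n := by
    have := Finset.card_filter_le Finset.univ (fun i => x i)
    simpa [hw] using this
  have h05 : (-0.5 : ℝ) = -(1/2) := by norm_num
  have hpos : hw x ∈ A → 0 < -0.5 + ∑ i ∈ A, Δ i (hw x) := by
    intro hmem
    have := half_lt_sum A (hw x) hmem
    rw [h05]; linarith
  have hneg : hw x ∉ A → -0.5 + ∑ i ∈ A, Δ i (hw x) < 0 := by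
    intro hmem
    have := sum_lt_half n A hA (hw x) hk hmem
    rw [h05]; linarith
  refine ⟨hpos, hneg, ?_⟩
  by_cases hmem : hw x ∈ A
  · rw [Real.sign_of_pos (hpos hmem)]
    simp [fA, hmem]
  · rw [Real.sign_of_neg (hneg hmem)]
    simp [fA, hmem]
end

section
/- Let n ∈ ℕ, let A ⊆ {0,1,...,n}, and let x ∈ {0,1}^n with |x| ∈ A. Then ∑_{i∈A} Δ_i(x) ≥ 2σ(2.5) − 1 > 0.84. -/
lemma delta_nonneg (i k : ℕ) : 0 ≤ Δ i k := by
  unfold Δ sigmoid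
  set a : ℝ := 5 * ((k : ℝ) - (i : ℝ) + 0.5) with ha
  set b : ℝ := 5 * ((i : ℝ) + 0.5 - (k : ℝ)) with hb
  have hab : (-a) + (-b) = -5 := by rw [ha, hb]; ring
  have hu : Real.exp (-a) * Real.exp (-b) = Real.exp (-5) := by
    rw [← Real.exp_add, hab]
  have hu1 : (0:ℝ) < Real.exp (-a) := Real.exp_pos _
  have hu2 : (0:ℝ) < Real.exp (-b) := Real.exp_pos _
  have h5 : Real.exp (-5 : ℝ) < 1 := Real.exp_lt_one_iff.mpr (by norm_num)
  have hd1 : (0:ℝ) < 1 + Real.exp (-a) := by linarith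
  have hd2 : (0:ℝ) < 1 + Real.exp (-b) := by linarith
  rw [div_add_div _ _ (ne_of_gt hd1) (ne_of_gt hd2), sub_nonneg,
    le_div_iff₀ (mul_pos hd1 hd2)]
  nlinarith

lemma delta_self (k : ℕ) : Δ k k = 2 * sigmoid 2.5 - 1 := by
  unfold Δ
  norm_num
  ring

theorem stmt1 (n : ℕ) (A : Finset ℕ) (hA : A ⊆ Finset.range (n + 1))
    (x : Fin n → Bool) (hx : hw x ∈ A) :
    2 * sigmoid 2.5 - 1 ≤ ∑ i ∈ A, Δ i (hw x) ∧ (0.84 : ℝ) < 2 * sigmoid 2.5 - 1 := by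
  constructor
  · calc 2 * sigmoid 2.5 - 1 = Δ (hw x) (hw x) := (delta_self _).symm
      _ ≤ ∑ i ∈ A, Δ i (hw x) :=
        Finset.single_le_sum (fun i _ => delta_nonneg i (hw x)) hx
  · have h1 : Real.exp (0.5 : ℝ) * Real.exp 0.5 = Real.exp 1 := by
      rw [← Real.exp_add]; norm_num
    have he : (2.7182818283 : ℝ) < Real.exp 1 := Real.exp_one_gt_d9
    have hp : (0:ℝ) < Real.exp 0.5 := Real.exp_pos _
    have h2 : (1.648 : ℝ) < Real.exp 0.5 := by nlinarith
    have h3 : Real.exp (2.5 : ℝ) = Real.exp 0.5 * Real.exp 0.5 * Real.exp 0.5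
        * Real.exp 0.5 * Real.exp 0.5 := by
      rw [← Real.exp_add, ← Real.exp_add, ← Real.exp_add, ← Real.exp_add]; norm_num
    have ha2 : (2.716 : ℝ) < Real.exp 0.5 * Real.exp 0.5 := by nlinarith
    have ha4 : (7.37 : ℝ) < Real.exp 0.5 * Real.exp 0.5 * Real.exp 0.5 * Real.exp 0.5 := by
      nlinarith
    have h4 : (11.5 : ℝ) < Real.exp 2.5 := by rw [h3]; nlinarith
    have h5 : Real.exp (-(2.5:ℝ)) < 1/11.5 := by
      rw [Real.exp_neg, inv_lt_comm₀ (Real.exp_pos _) (by norm_num)]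
      linarith
    have h6 : (0:ℝ) < 1 + Real.exp (-(2.5:ℝ)) := by positivity
    have h7 : (0.92 : ℝ) < 1 / (1 + Real.exp (-(2.5:ℝ))) := by
      rw [lt_div_iff₀ h6]; nlinarith
    unfold sigmoid
    norm_num at h7 ⊢
    linarith
end

section
/- Let n ∈ ℕ, let A ⊆ {0,1,...,n}, and let x ∈ {0,1}^n with |x| ∉ A. Then ∑_{i∈A} Δ_i(x) < 2·exp(−2.5)/(1 − exp(−5)) < 0.17. -/
lemma sigmoid_lt_one (ξ : ℝ) : sigmoid ξ < 1 := by
  unfold sigmoid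
  rw [div_lt_one (by positivity)]
  linarith [Real.exp_pos (-ξ)]

lemma sum_pow_le_s2 {r : ℝ} (hr0 : 0 ≤ r) (hr1 : r < 1) (T : Finset ℕ) :
    ∑ j ∈ T, r ^ j ≤ 1 / (1 - r) := by
  have hsub : T ⊆ Finset.range (T.sup id + 1) := by
    intro j hj
    simp only [Finset.mem_range]
    exact Nat.lt_succ_of_le (Finset.le_sup (f := id) hj)
  calc ∑ j ∈ T, r ^ j ≤ ∑ j ∈ Finset.range (T.sup id + 1), r ^ j :=
        Finset.sum_le_sum_of_subset_of_nonneg hsub (fun i _ _ => by positivity)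
    _ ≤ 1 / (1 - r) := by
        rw [geom_sum_eq (by linarith : r ≠ 1)]
        have he : (r ^ (T.sup id + 1) - 1) / (r - 1) = (1 - r ^ (T.sup id + 1)) / (1 - r) := by
          rw [← neg_div_neg_eq]; ring_nf
        rw [he, div_le_div_iff₀ (by linarith) (by linarith)]
        have : (0:ℝ) ≤ r ^ (T.sup id + 1) := by positivity
        nlinarith

lemma sum_pow_inj {r : ℝ} (hr0 : 0 ≤ r) (hr1 : r < 1) (S : Finset ℕ) (f : ℕ → ℕ)
    (hinj : ∀ a ∈ S, ∀ b ∈ S, f a = f b → a = b) :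
    ∑ i ∈ S, r ^ (f i) ≤ 1 / (1 - r) := by
  calc ∑ i ∈ S, r ^ (f i) = ∑ j ∈ S.image f, r ^ j := (Finset.sum_image hinj).symm
    _ ≤ 1 / (1 - r) := sum_pow_le_s2 hr0 hr1 _

lemma exp5_gt : (148.41 : ℝ) < Real.exp 5 := by
  have h5 : Real.exp 5 = Real.exp 1 ^ 5 := by
    rw [← Real.exp_nat_mul]; norm_num
  rw [h5]
  calc (148.41:ℝ) < 2.7182818 ^ 5 := by norm_num
    _ ≤ Real.exp 1 ^ 5 :=
        pow_le_pow_left₀ (by norm_num) (le_of_lt (by linarith [Real.exp_one_gt_d9])) 5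

lemma num_bound : 2 * Real.exp (-2.5) / (1 - Real.exp (-5)) < 0.17 := by
  have h5 := exp5_gt
  have hm : Real.exp (-5) * Real.exp 5 = 1 := by rw [← Real.exp_add]; norm_num
  have hm5 : Real.exp (-5) < 0.006739 := by
    nlinarith [Real.exp_pos (-5)]
  have hsq : Real.exp (-2.5) * Real.exp (-2.5) = Real.exp (-5) := by
    rw [← Real.exp_add]; norm_num
  have h25 : Real.exp (-2.5) < 0.0821 := by
    nlinarith [Real.exp_pos (-2.5)]
  have hpos : (0:ℝ) < 1 - Real.exp (-5) := by linarith [Real.exp_pos (-5)]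
  rw [div_lt_iff₀ hpos]
  nlinarith [Real.exp_pos (-5), Real.exp_pos (-2.5)]

lemma Δ_lt_left {i k : ℕ} (h : i < k) :
    Δ i k < Real.exp (-2.5) * Real.exp (-5) ^ (k - 1 - i) := by
  have h1 : Δ i k < Real.exp (5 * ((i:ℝ) + 0.5 - k)) := by
    calc Δ i k < sigmoid (5 * ((i:ℝ) + 0.5 - k)) := by
          unfold Δ; linarith [sigmoid_lt_one (5 * ((k:ℝ) - i + 0.5))]
      _ ≤ _ := sigmoid_le_exp _
  have h2 : Real.exp (-2.5) * Real.exp (-5) ^ (k - 1 - i)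
      = Real.exp (5 * ((i:ℝ) + 0.5 - k)) := by
    rw [← Real.exp_nat_mul, ← Real.exp_add]
    congr 1
    rw [Nat.cast_sub (by omega), Nat.cast_sub (by omega)]
    push_cast
    ring
  rw [h2]; exact h1

lemma Δ_lt_right {i k : ℕ} (h : k < i) :
    Δ i k < Real.exp (-2.5) * Real.exp (-5) ^ (i - k - 1) := by
  have h1 : Δ i k < Real.exp (5 * ((k:ℝ) - i + 0.5)) := by
    calc Δ i k < sigmoid (5 * ((k:ℝ) - i + 0.5)) := by
          unfold Δ; linarith [sigmoid_lt_one (5 * ((i:ℝ) + 0.5 - k))]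
      _ ≤ _ := sigmoid_le_exp _
  have h2 : Real.exp (-2.5) * Real.exp (-5) ^ (i - k - 1)
      = Real.exp (5 * ((k:ℝ) - i + 0.5)) := by
    rw [← Real.exp_nat_mul, ← Real.exp_add]
    congr 1
    rw [Nat.cast_sub (by omega), Nat.cast_sub (by omega)]
    push_cast
    ring
  rw [h2]; exact h1

theorem stmt2 (n : ℕ) (A : Finset ℕ) (hA : A ⊆ Finset.range (n + 1))
    (x : Fin n → Bool) (hx : hw x ∉ A) :
    ∑ i ∈ A, Δ i (hw x) < 2 * Real.exp (-2.5) / (1 - Real.exp (-5)) ∧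
    2 * Real.exp (-2.5) / (1 - Real.exp (-5)) < 0.17 := by
  set k := hw x with hk
  have hr0 : (0:ℝ) ≤ Real.exp (-5) := (Real.exp_pos _).le
  have hr1 : Real.exp (-5) < 1 := by
    calc Real.exp (-5) < Real.exp 0 := Real.exp_lt_exp.mpr (by norm_num)
      _ = 1 := Real.exp_zero
  refine ⟨?_, num_bound⟩
  rcases A.eq_empty_or_nonempty with rfl | hne
  · simp only [Finset.sum_empty]
    apply div_pos (by positivity) (by linarith)
  · set g : ℕ → ℝ := fun i =>
      Real.exp (-2.5) * Real.exp (-5) ^ (if i < k then k - 1 - i else i - k - 1) with hg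
    have hlt : ∑ i ∈ A, Δ i k < ∑ i ∈ A, g i := by
      apply Finset.sum_lt_sum_of_nonempty hne
      intro i hi
      have hik : i ≠ k := fun h => hx (h ▸ hi)
      by_cases h : i < k
      · simp only [hg, if_pos h]
        exact Δ_lt_left h
      · have h' : k < i := by omega
        simp only [hg, if_neg h]
        exact Δ_lt_right h'
    have hsplit := Finset.sum_filter_add_sum_filter_not A (· < k) g
    have hb1 : ∑ i ∈ A.filter (· < k), g i
        ≤ Real.exp (-2.5) * (1 / (1 - Real.exp (-5))) := by
      have heq : ∑ i ∈ A.filter (· < k), g i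
          = Real.exp (-2.5) * ∑ i ∈ A.filter (· < k), Real.exp (-5) ^ (k - 1 - i) := by
        rw [Finset.mul_sum]
        apply Finset.sum_congr rfl
        intro i hi
        have := (Finset.mem_filter.mp hi).2
        simp only [hg, if_pos this]
      rw [heq]
      apply mul_le_mul_of_nonneg_left _ (Real.exp_pos _).le
      apply sum_pow_inj hr0 hr1
      intro a ha b hb hab
      have ha' := (Finset.mem_filter.mp ha).2
      have hb' := (Finset.mem_filter.mp hb).2
      omega
    have hb2 : ∑ i ∈ A.filter (fun i => ¬ i < k), g i
        ≤ Real.exp (-2.5) * (1 / (1 - Real.exp (-5))) := by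
      have heq : ∑ i ∈ A.filter (fun i => ¬ i < k), g i
          = Real.exp (-2.5) * ∑ i ∈ A.filter (fun i => ¬ i < k), Real.exp (-5) ^ (i - k - 1) := by
        rw [Finset.mul_sum]
        apply Finset.sum_congr rfl
        intro i hi
        have := (Finset.mem_filter.mp hi).2
        simp only [hg, if_neg this]
      rw [heq]
      apply mul_le_mul_of_nonneg_left _ (Real.exp_pos _).le
      apply sum_pow_inj hr0 hr1
      intro a ha b hb hab
      have ha' := (Finset.mem_filter.mp ha).2
      have hb' := (Finset.mem_filter.mp hb).2
      have ha2 : a ≠ k := fun h => hx (h ▸ (Finset.mem_filter.mp ha).1)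
      have hb2 : b ≠ k := fun h => hx (h ▸ (Finset.mem_filter.mp hb).1)
      omega
    have hfin : Real.exp (-2.5) * (1 / (1 - Real.exp (-5)))
        + Real.exp (-2.5) * (1 / (1 - Real.exp (-5)))
        = 2 * Real.exp (-2.5) / (1 - Real.exp (-5)) := by ring
    linarith
end

section
/- Let A = {i_1 < i_2 < ... < i_t} ⊆ {1,...,n} with t > 1, and let B = {(i_1+i_2)/2, (i_2+i_3)/2, ..., (i_{t−1}+i_t)/2}. For every x ∈ {0,1}^n: if |x| ∈ A then (i_t − i_1)/2 + 0.5 + ∑_{i∈A} Γ_i(x) − ∑_{μ∈B} Γ_μ(x) = 0.5, and if |x| ∉ A then (i_t − i_1)/2 + 0.5 + ∑_{i∈A} Γ_i(x) − ∑_{μ∈B} Γ_μ(x) ≤ −0.5. In particular, f_A(x) = sign((i_t − i_1)/2 + 0.5 + ∑_{i∈A} Γ_i(x) − ∑_{μ∈B} Γ_μ(x)) for all x ∈ {0,1}^n. -/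
/-!
Since `Γ a w = -|w - a|`, splitting each `|w - i_k|` into two halves shared with its neighbours
rewrites the network as `1/2` minus the distance from `w` to `[i_1, i_t]` minus, for every pair
`u < v` of consecutive elements of `A`, the defect `(|w - u| + |w - v|) / 2 - |w - (u + v) / 2|`.
All these terms are nonnegative and vanish when `w` is one of the `i_k`. When `w` is an integer
outside `A`, one of them is at least `1`: the distance term if `w ∉ [i_1, i_t]`, and otherwise the
defect of the gap `i_k < w < i_{k+1}`.
-/

/-- ReLU(ξ) = max{0, ξ}. -/
def relu (ξ : ℝ) : ℝ := max 0 ξ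

/-- Γ_a(x) = −ReLU(|x| − a) − ReLU(a − |x|), as a function of w = |x| ∈ ℝ. -/
def Γ (a w : ℝ) : ℝ := -relu (w - a) - relu (a - w)

lemma Γ_eq_neg_abs (a w : ℝ) : Γ a w = -|w - a| := by
  unfold Γ relu
  rcases le_total a w with h | h
  · rw [max_eq_right (by linarith), max_eq_left (by linarith), abs_of_nonneg (by linarith)]
    ring
  · rw [max_eq_left (by linarith), max_eq_right (by linarith), abs_of_nonpos (by linarith)]
    ring

lemma Fin.sum_univ_eq_half_ends_add_sum_half_adjacent {t : ℕ} (f : Fin (t + 1) → ℝ) :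
    ∑ j, f j = (f 0 + f (Fin.last t)) / 2 + ∑ j : Fin t, (f j.castSucc + f j.succ) / 2 := by
  rw [← Finset.sum_div, Finset.sum_add_distrib]
  linarith [Fin.sum_univ_castSucc f, Fin.sum_univ_succ f]

lemma Fin.exists_castSucc_le_lt_succ {α : Type*} [LinearOrder α] {t : ℕ} (b : Fin (t + 1) → α)
    {w : α} (h0 : b 0 ≤ w) (hlast : w < b (Fin.last t)) :
    ∃ j : Fin t, b j.castSucc ≤ w ∧ w < b j.succ := by
  by_contra! hstep
  have hle : ∀ i, b i ≤ w := fun i => Fin.induction h0 hstep i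
  exact (hle (Fin.last t)).not_gt hlast

/-- The distance from `w` to the interval `[u, v]` (when `u ≤ v`). -/
noncomputable def intervalDefect (u v w : ℝ) : ℝ := (|w - u| + |w - v| - (v - u)) / 2

lemma intervalDefect_nonneg (u v w : ℝ) : 0 ≤ intervalDefect u v w := by
  unfold intervalDefect
  linarith [abs_sub_le v w u, abs_sub_comm v w, le_abs_self (v - u)]

lemma intervalDefect_eq_zero {u v w : ℝ} (hu : u ≤ w) (hv : w ≤ v) : intervalDefect u v w = 0 := by
  unfold intervalDefect
  rw [abs_of_nonneg (by linarith), abs_of_nonpos (by linarith)]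
  ring

lemma one_le_intervalDefect {u v w : ℝ} (h : w + 1 ≤ u ∨ v + 1 ≤ w) : 1 ≤ intervalDefect u v w := by
  unfold intervalDefect
  rcases h with h | h
  · rw [abs_of_nonpos (by linarith : w - u ≤ 0)]
    linarith [neg_abs_le (w - v)]
  · rw [abs_of_nonneg (by linarith : 0 ≤ w - v)]
    linarith [le_abs_self (w - u)]

noncomputable def midpointDefect (u v w : ℝ) : ℝ := (|w - u| + |w - v|) / 2 - |w - (u + v) / 2|

lemma midpointDefect_nonneg (u v w : ℝ) : 0 ≤ midpointDefect u v w := by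
  unfold midpointDefect
  have hmid : |w - (u + v) / 2| = |(w - u) + (w - v)| / 2 := by
    rw [show w - (u + v) / 2 = ((w - u) + (w - v)) / 2 by ring, abs_div, abs_two]
  rw [hmid]
  linarith [abs_add_le (w - u) (w - v)]

lemma midpointDefect_eq_zero {u v w : ℝ} (huv : u ≤ v) (h : w ≤ u ∨ v ≤ w) :
    midpointDefect u v w = 0 := by
  unfold midpointDefect
  rcases h with h | h
  · rw [abs_of_nonpos (by linarith), abs_of_nonpos (by linarith), abs_of_nonpos (by linarith)]
    ring
  · rw [abs_of_nonneg (by linarith), abs_of_nonneg (by linarith), abs_of_nonneg (by linarith)]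
    ring

lemma one_le_midpointDefect {u v w : ℝ} (hu : u + 1 ≤ w) (hv : w + 1 ≤ v) :
    1 ≤ midpointDefect u v w := by
  unfold midpointDefect
  rw [abs_of_nonneg (by linarith), abs_of_nonpos (by linarith)]
  have : |w - (u + v) / 2| ≤ (v - u) / 2 - 1 := abs_le.mpr ⟨by linarith, by linarith⟩
  linarith

/-- The network of the theorem, for `A = {b 0, …, b t}` and `w = |x|`. -/
noncomputable def reluNet {t : ℕ} (b : Fin (t + 1) → ℝ) (w : ℝ) : ℝ :=
  (b (Fin.last t) - b 0) / 2 + 0.5 + ∑ j, Γ (b j) w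
    - ∑ j : Fin t, Γ ((b j.castSucc + b j.succ) / 2) w

lemma reluNet_eq {t : ℕ} (b : Fin (t + 1) → ℝ) (w : ℝ) :
    reluNet b w = 0.5 - intervalDefect (b 0) (b (Fin.last t)) w
      - ∑ j : Fin t, midpointDefect (b j.castSucc) (b j.succ) w := by
  simp only [reluNet, Γ_eq_neg_abs, Finset.sum_neg_distrib, intervalDefect, midpointDefect,
    Finset.sum_sub_distrib]
  rw [Fin.sum_univ_eq_half_ends_add_sum_half_adjacent (fun j => |w - b j|)]
  ring

lemma reluNet_eq_of_mem_range {t : ℕ} {b : Fin (t + 1) → ℝ} (hb : Monotone b) {w : ℝ}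
    (hw : w ∈ Set.range b) : reluNet b w = 0.5 := by
  obtain ⟨k, rfl⟩ := hw
  have hmid : ∀ j : Fin t, midpointDefect (b j.castSucc) (b j.succ) (b k) = 0 := by
    intro j
    refine midpointDefect_eq_zero (hb Fin.castSucc_lt_succ.le) ?_
    rcases le_or_gt k j.castSucc with h | h
    · exact Or.inl (hb h)
    · exact Or.inr (hb (Fin.castSucc_lt_iff_succ_le.mp h))
  rw [reluNet_eq, intervalDefect_eq_zero (hb (Fin.zero_le k)) (hb (Fin.le_last k)),
    Finset.sum_eq_zero fun j _ => hmid j]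
  ring

lemma reluNet_le_of_separated {t : ℕ} {b : Fin (t + 1) → ℝ} {w : ℝ}
    (hsep : ∀ j, b j + 1 ≤ w ∨ w + 1 ≤ b j) : reluNet b w ≤ -0.5 := by
  have hmid : 0 ≤ ∑ j : Fin t, midpointDefect (b j.castSucc) (b j.succ) w :=
    Finset.sum_nonneg fun j _ => midpointDefect_nonneg _ _ _
  rw [reluNet_eq]
  by_cases hout : w + 1 ≤ b 0 ∨ b (Fin.last t) + 1 ≤ w
  · linarith [one_le_intervalDefect hout]
  push Not at hout
  have h0 : b 0 + 1 ≤ w := (hsep 0).resolve_right hout.1.not_ge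
  have hlast : w + 1 ≤ b (Fin.last t) := (hsep _).resolve_left hout.2.not_ge
  obtain ⟨k, hle, hlt⟩ := Fin.exists_castSucc_le_lt_succ b (w := w) (by linarith) (by linarith)
  have hgap : 1 ≤ midpointDefect (b k.castSucc) (b k.succ) w :=
    one_le_midpointDefect ((hsep _).resolve_right (by linarith))
      ((hsep _).resolve_left (by linarith))
  have : 1 ≤ ∑ j : Fin t, midpointDefect (b j.castSucc) (b j.succ) w :=
    hgap.trans (Finset.single_le_sum (f := fun j => midpointDefect (b j.castSucc) (b j.succ) w)
      (fun j _ => midpointDefect_nonneg _ _ _) (Finset.mem_univ k))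
  linarith [intervalDefect_nonneg (b 0) (b (Fin.last t)) w]

open Classical in
/-- `A` is the range of the strictly monotone map `a`, and the midpoint of `a j.castSucc` and
`a j.succ` runs over `B`. -/
theorem stmt4_general (n t : ℕ) (a : Fin (t + 1) → ℕ) (ha : StrictMono a)
    (x : Fin n → Bool) :
    ((∃ j, a j = hw x) →
      ((a (Fin.last t) : ℝ) - (a 0 : ℝ)) / 2 + 0.5
        + (∑ j, Γ (a j : ℝ) (hw x : ℝ))
        - (∑ j : Fin t, Γ (((a j.castSucc : ℝ) + (a j.succ : ℝ)) / 2) (hw x : ℝ)) = 0.5) ∧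
    ((¬ ∃ j, a j = hw x) →
      ((a (Fin.last t) : ℝ) - (a 0 : ℝ)) / 2 + 0.5
        + (∑ j, Γ (a j : ℝ) (hw x : ℝ))
        - (∑ j : Fin t, Γ (((a j.castSucc : ℝ) + (a j.succ : ℝ)) / 2) (hw x : ℝ)) ≤ -0.5) ∧
    (if ∃ j, a j = hw x then (1 : ℝ) else -1) =
      Real.sign (((a (Fin.last t) : ℝ) - (a 0 : ℝ)) / 2 + 0.5
        + (∑ j, Γ (a j : ℝ) (hw x : ℝ))
        - (∑ j : Fin t, Γ (((a j.castSucc : ℝ) + (a j.succ : ℝ)) / 2) (hw x : ℝ))) := by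
  have hb : Monotone fun j => (a j : ℝ) := fun i j hij => Nat.cast_le.mpr (ha.monotone hij)
  have hit : (∃ j, a j = hw x) → reluNet (fun j => (a j : ℝ)) (hw x) = 0.5 :=
    fun ⟨k, hk⟩ => reluNet_eq_of_mem_range hb ⟨k, congrArg Nat.cast hk⟩
  have miss : (¬ ∃ j, a j = hw x) → reluNet (fun j => (a j : ℝ)) (hw x) ≤ -0.5 := by
    refine fun hne => reluNet_le_of_separated fun j => ?_
    have : a j + 1 ≤ hw x ∨ hw x + 1 ≤ a j := by
      have : a j ≠ hw x := fun h => hne ⟨j, h⟩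
      omega
    exact_mod_cast this
  refine ⟨hit, miss, ?_⟩
  change _ = Real.sign (reluNet (fun j => (a j : ℝ)) (hw x))
  split_ifs with h
  · exact (Real.sign_of_pos (by linarith [hit h])).symm
  · exact (Real.sign_of_neg (by linarith [miss h])).symm

open Classical in
/-- Lemma on the ReLU representation of symmetric functions.  The set
A = {i_1 < ... < i_t} ⊆ {1,...,n} with t > 1 is encoded by a strictly monotone
map `a : Fin (t+1) → ℕ` (so the set has t+1 ≥ 2 elements), and
B = {(i_1+i_2)/2, ..., (i_{t−1}+i_t)/2} is the set of midpoints of consecutive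
elements of A. -/
theorem stmt4 (n t : ℕ) (ht : 1 ≤ t) (a : Fin (t + 1) → ℕ) (ha : StrictMono a)
    (haI : ∀ j, a j ∈ Finset.Icc 1 n) (x : Fin n → Bool) :
    ((∃ j, a j = hw x) →
      ((a (Fin.last t) : ℝ) - (a 0 : ℝ)) / 2 + 0.5
        + (∑ j, Γ (a j : ℝ) (hw x : ℝ))
        - (∑ j : Fin t, Γ (((a j.castSucc : ℝ) + (a j.succ : ℝ)) / 2) (hw x : ℝ)) = 0.5) ∧
    ((¬ ∃ j, a j = hw x) →
      ((a (Fin.last t) : ℝ) - (a 0 : ℝ)) / 2 + 0.5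
        + (∑ j, Γ (a j : ℝ) (hw x : ℝ))
        - (∑ j : Fin t, Γ (((a j.castSucc : ℝ) + (a j.succ : ℝ)) / 2) (hw x : ℝ)) ≤ -0.5) ∧
    (if ∃ j, a j = hw x then (1 : ℝ) else -1) =
      Real.sign (((a (Fin.last t) : ℝ) - (a 0 : ℝ)) / 2 + 0.5
        + (∑ j, Γ (a j : ℝ) (hw x : ℝ))
        - (∑ j : Fin t, Γ (((a j.castSucc : ℝ) + (a j.succ : ℝ)) / 2) (hw x : ℝ))) :=
  stmt4_general n t a ha x
end

section
/- For every n ≥ 1 and every symmetric function f ∈ 𝕊_n, there exist a weight matrix W ∈ ℝ^{(4n+3)×n}, a bias vector B ∈ ℝ^{4n+3}, an output weight vector M ∈ ℝ^{4n+3} with all entries in {−1, 1}, and an output bias b ∈ ℝ such that for all x ∈ {0,1}^n, f(x)·(M·ReLU(Wx + B) + b) > 0, where ReLU(ξ) = max{0,ξ} is applied coordinatewise. That is, every symmetric function on {0,1}^n is represented (in sign) by a network with one hidden layer of 4n+3 ReLU neurons whose output-layer coefficients are ±1. -/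
/-- x ∈ {0,1}^n viewed as a real vector. -/
def toR {n : ℕ} (x : Fin n → Bool) : Fin n → ℝ := fun i => if x i then 1 else 0

noncomputable section Aux

lemma relu_nonpos {a : ℝ} (h : a ≤ 0) : relu a = 0 := max_eq_left h
lemma relu_nonneg' {a : ℝ} (h : 0 ≤ a) : relu a = a := max_eq_right h

def cA (A : Finset ℕ) (k : ℕ) : ℝ := if k ∈ A then 1 else -1

lemma cA_pm (A : Finset ℕ) (k : ℕ) : cA A k = 1 ∨ cA A k = -1 := by
  by_cases h : k ∈ A <;> simp [cA, h]

def Bf (n : ℕ) (j : ℕ) : ℝ :=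
  if j < 4*n then (if j % 4 = 0 then 1 else if j % 4 = 3 then -1 else 0) - ((j / 4 : ℕ) : ℝ)
  else if j = 4*n then 1 - (n:ℝ) else 0

def Mf (n : ℕ) (A : Finset ℕ) (j : ℕ) : ℝ :=
  if j < 4*n then (if j % 4 = 0 ∨ j % 4 = 3 then cA A (j/4) else -(cA A (j/4)))
  else if j = 4*n then cA A n else 1

def gf (n m : ℕ) (A : Finset ℕ) (j : ℕ) : ℝ :=
  Mf n A j * relu ((if j ≤ 4*n then (m:ℝ) else 0) + Bf n j)

lemma Mf_pm (n : ℕ) (A : Finset ℕ) (j : ℕ) : Mf n A j = 1 ∨ Mf n A j = -1 := by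
  unfold Mf
  split_ifs with h1 h2 h3
  · exact cA_pm A _
  · rcases cA_pm A (j/4) with h | h <;> rw [h]
    · exact Or.inr (by norm_num)
    · exact Or.inl (by norm_num)
  · exact cA_pm A _
  · exact Or.inl rfl

lemma tent (m k : ℕ) :
    relu ((m:ℝ) + (1 - k)) - relu ((m:ℝ) + (0 - k)) - relu ((m:ℝ) + (0 - k))
      + relu ((m:ℝ) + (-1 - k)) = if m = k then 1 else 0 := by
  rcases lt_trichotomy m k with h | h | h
  · have hc : (m:ℝ) + 1 ≤ k := by exact_mod_cast h
    rw [relu_nonpos (by linarith), relu_nonpos (by linarith), relu_nonpos (by linarith),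
      if_neg (by omega)]
    ring
  · subst h
    rw [show (m:ℝ) + (1 - m) = 1 by ring, show (m:ℝ) + (0 - m) = 0 by ring,
      show (m:ℝ) + (-1 - m) = -1 by ring, if_pos rfl]
    norm_num [relu]
  · have hc : (k:ℝ) + 1 ≤ m := by exact_mod_cast h
    rw [relu_nonneg' (by linarith), relu_nonneg' (by linarith), relu_nonneg' (by linarith),
      if_neg (by omega)]
    ring

lemma sum_four (N : ℕ) (g : ℕ → ℝ) :
    ∑ j ∈ Finset.range (4*N), g j
      = ∑ k ∈ Finset.range N, (g (4*k) + g (4*k+1) + g (4*k+2) + g (4*k+3)) := by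
  induction N with
  | zero => simp
  | succ N ih =>
    rw [show 4*(N+1) = (4*N+2+1)+1 by ring, Finset.sum_range_succ, Finset.sum_range_succ,
      show 4*N+2 = (4*N+1)+1 by ring, Finset.sum_range_succ,
      show 4*N+1 = (4*N)+1 by ring, Finset.sum_range_succ,
      ih, Finset.sum_range_succ]
    ring

lemma gf_block (n m : ℕ) (A : Finset ℕ) (k : ℕ) (hk : k < n) :
    gf n m A (4*k) + gf n m A (4*k+1) + gf n m A (4*k+2) + gf n m A (4*k+3)
      = if m = k then cA A k else 0 := by
  have G0 : gf n m A (4*k) = cA A k * relu ((m:ℝ) + (1 - k)) := by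
    have h1 : 4*k < 4*n := by omega
    have h2 : 4*k ≤ 4*n := by omega
    have h3 : 4*k % 4 = 0 := by omega
    have h4 : 4*k / 4 = k := by omega
    simp [gf, Mf, Bf, h1, h2, h3, h4]
  have G1 : gf n m A (4*k+1) = -(cA A k) * relu ((m:ℝ) + (0 - k)) := by
    have h1 : 4*k+1 < 4*n := by omega
    have h2 : 4*k+1 ≤ 4*n := by omega
    have h3 : (4*k+1) % 4 = 1 := by omega
    have h4 : (4*k+1) / 4 = k := by omega
    simp [gf, Mf, Bf, h1, h2, h3, h4]
  have G2 : gf n m A (4*k+2) = -(cA A k) * relu ((m:ℝ) + (0 - k)) := by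
    have h1 : 4*k+2 < 4*n := by omega
    have h2 : 4*k+2 ≤ 4*n := by omega
    have h3 : (4*k+2) % 4 = 2 := by omega
    have h4 : (4*k+2) / 4 = k := by omega
    simp [gf, Mf, Bf, h1, h2, h3, h4]
  have G3 : gf n m A (4*k+3) = cA A k * relu ((m:ℝ) + (-1 - k)) := by
    have h1 : 4*k+3 < 4*n := by omega
    have h2 : 4*k+3 ≤ 4*n := by omega
    have h3 : (4*k+3) % 4 = 3 := by omega
    have h4 : (4*k+3) / 4 = k := by omega
    simp [gf, Mf, Bf, h1, h2, h3, h4]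
  rw [G0, G1, G2, G3]
  have h2 := tent m k
  by_cases h : m = k
  · rw [if_pos h] at h2 ⊢; linear_combination cA A k * h2
  · rw [if_neg h] at h2 ⊢; linear_combination cA A k * h2

lemma gf_total (n m : ℕ) (hn : 1 ≤ n) (hm : m ≤ n) (A : Finset ℕ) :
    ∑ j ∈ Finset.range (4*n+3), gf n m A j = cA A m := by
  have Gn : gf n m A (4*n) = if m = n then cA A n else 0 := by
    have e : gf n m A (4*n) = cA A n * relu ((m:ℝ) + (1 - n)) := by
      simp [gf, Mf, Bf]
    rcases eq_or_lt_of_le hm with h | h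
    · subst h
      rw [e, relu_nonneg' (by linarith), if_pos rfl]
      ring
    · have hc : (m:ℝ) + 1 ≤ n := by exact_mod_cast h
      rw [e, relu_nonpos (by linarith), if_neg (by omega)]
      ring
  have G1 : gf n m A (4*n+1) = 0 := by
    have h1 : ¬ (4*n+1 < 4*n) := by omega
    have h2 : ¬ (4*n+1 ≤ 4*n) := by omega
    have h3 : ¬ (4*n+1 = 4*n) := by omega
    simp [gf, Mf, Bf, h1, h2, h3, relu]
  have G2 : gf n m A (4*n+2) = 0 := by
    have h1 : ¬ (4*n+2 < 4*n) := by omega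
    have h2 : ¬ (4*n+2 ≤ 4*n) := by omega
    have h3 : ¬ (4*n+2 = 4*n) := by omega
    simp [gf, Mf, Bf, h1, h2, h3, relu]
  rw [show 4*n+3 = (4*n+2)+1 by ring, Finset.sum_range_succ,
    show 4*n+2 = (4*n+1)+1 by ring, Finset.sum_range_succ,
    show 4*n+1 = (4*n)+1 by ring, Finset.sum_range_succ,
    sum_four, Gn, G1, G2]
  have hb : ∀ k ∈ Finset.range n,
      gf n m A (4*k) + gf n m A (4*k+1) + gf n m A (4*k+2) + gf n m A (4*k+3)
        = if m = k then cA A k else 0 := fun k hk =>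
    gf_block n m A k (Finset.mem_range.mp hk)
  rw [Finset.sum_congr rfl hb, Finset.sum_ite_eq]
  simp only [Finset.mem_range]
  rcases eq_or_lt_of_le hm with h | h
  · subst h
    rw [if_neg (lt_irrefl _), if_pos rfl]; ring
  · rw [if_pos h, if_neg (by omega)]; ring

end Aux

/-- Every symmetric function f ∈ 𝕊_n is represented (in sign) by a network with one
hidden layer of 4n+3 ReLU neurons whose output-layer coefficients are ±1. -/
theorem stmt5 (n : ℕ) (hn : 1 ≤ n) (f : (Fin n → Bool) → ℝ)
    (hf : ∃ A : Finset ℕ, A ⊆ Finset.range (n + 1) ∧ f = fA A) :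
    ∃ (W : Matrix (Fin (4 * n + 3)) (Fin n) ℝ) (B M : Fin (4 * n + 3) → ℝ) (b : ℝ),
      (∀ i, M i = 1 ∨ M i = -1) ∧
      ∀ x : Fin n → Bool,
        0 < f x * ((∑ i, M i * relu (W.mulVec (toR x) i + B i)) + b) := by
  obtain ⟨A, -, rfl⟩ := hf
  refine ⟨(fun i _ => if (i:ℕ) ≤ 4*n then 1 else 0), (fun i => Bf n (i:ℕ)),
    (fun i => Mf n A (i:ℕ)), 0, fun i => Mf_pm n A (i:ℕ), fun x => ?_⟩
  have hm : hw x ≤ n := le_trans (Finset.card_filter_le _ _) (by simp)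
  have hsx : ∑ j : Fin n, toR x j = ((hw x : ℕ) : ℝ) := by
    simp [toR, hw, Finset.sum_boole]
  have hmv : ∀ i : Fin (4*n+3),
      Matrix.mulVec (fun i _ => if ((i : Fin (4*n+3)):ℕ) ≤ 4*n then (1:ℝ) else 0) (toR x) i
        = if (i:ℕ) ≤ 4*n then ((hw x : ℕ) : ℝ) else 0 := by
    intro i
    simp only [Matrix.mulVec, dotProduct]
    split_ifs with h
    · simpa using hsx
    · simp
  have key : (∑ i : Fin (4*n+3),
      Mf n A (i:ℕ) * relu (Matrix.mulVec
        (fun i _ => if ((i : Fin (4*n+3)):ℕ) ≤ 4*n then (1:ℝ) else 0) (toR x) i + Bf n (i:ℕ)))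
      = cA A (hw x) := by
    rw [← gf_total n (hw x) hn hm A, ← Fin.sum_univ_eq_sum_range (gf n (hw x) A)]
    refine Finset.sum_congr rfl fun i _ => ?_
    rw [hmv i]; rfl
  rw [key, add_zero]
  have : fA A x = cA A (hw x) := rfl
  rw [this]
  rcases cA_pm A (hw x) with h | h <;> rw [h] <;> norm_num
end

section
/- For every n ≥ 1 and every symmetric function f ∈ 𝕊_n, there exist a vector M ∈ ℝ^{4n+2} with all entries in [−1, 1] and a scalar b ∈ ℝ with |b| ≤ n + 1 such that f(x)·(M·v_x + b) ≥ 0.25 for all x ∈ {0,1}^n, where v_x is the hidden-layer embedding under the explicit initialization. -/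
/-- Explicit initialization of the hidden weights: W⁰_{ij} = (−1)^{i+1} for 1-indexed
i ∈ {1,...,4n+2}; in 0-indexed form W⁰ i j = (−1)^i. -/
def W0 (n : ℕ) : Matrix (Fin (4 * n + 2)) (Fin n) ℝ := fun i _ => (-1 : ℝ) ^ (i : ℕ)

/-- Explicit initialization of the hidden biases: B⁰_i = 0.5·(−1)^i·⌊(i−1)/2⌋ for 1-indexed
i ∈ {1,...,4n+2}; in 0-indexed form B⁰ i = 0.5·(−1)^{i+1}·⌊i/2⌋. -/
noncomputable def B0 (n : ℕ) : Fin (4 * n + 2) → ℝ :=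
  fun i => 0.5 * (-1 : ℝ) ^ ((i : ℕ) + 1) * (((i : ℕ) / 2 : ℕ) : ℝ)

/-- The hidden-layer embedding v_x = ReLU(W⁰x + B⁰) under the explicit initialization. -/
noncomputable def vX (n : ℕ) (x : Fin n → Bool) : Fin (4 * n + 2) → ℝ :=
  fun i => max 0 ((W0 n).mulVec (toR x) i + B0 n i)

/-!
The embedding `v_x` depends only on `k = |x|`, and its coordinate `2m` is `ReLU(k - m/2)`.
For integral `k`, `ReLU(k - j - 1/2) - ReLU(k - j - 1) = [j < k] / 2`, so giving the units
`4j + 2` and `4j + 4` the weights `±2 (g (j + 1) - g j)` makes the output telescope to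
`g k - g 0`. With `g k = ±1/4` according to `k ∈ A` and bias `g 0`, the output is `f x / 4`.
-/

noncomputable def hiddenUnit (k i : ℕ) : ℝ :=
  max 0 ((-1 : ℝ) ^ i * k + 0.5 * (-1 : ℝ) ^ (i + 1) * ((i / 2 : ℕ) : ℝ))

lemma vX_eq_hiddenUnit {n : ℕ} (x : Fin n → Bool) (i : Fin (4 * n + 2)) :
    vX n x i = hiddenUnit (hw x) i := by
  simp only [vX, hiddenUnit, W0, B0, hw, toR, Matrix.mulVec, dotProduct, ← Finset.mul_sum,
    Finset.sum_boole]

lemma hiddenUnit_two_mul (k m : ℕ) : hiddenUnit k (2 * m) = max 0 ((k : ℝ) - m / 2) := by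
  have hdiv : 2 * m / 2 = m := by omega
  simp only [hiddenUnit, hdiv, pow_succ, pow_mul]
  ring_nf

lemma max_zero_sub_half_sub_max_zero_sub (k j : ℕ) :
    max 0 ((k : ℝ) - (j + 1 / 2)) - max 0 ((k : ℝ) - (j + 1)) =
      if j < k then 1 / 2 else 0 := by
  split_ifs with h
  · have : (j : ℝ) + 1 ≤ k := by exact_mod_cast h
    rw [max_eq_right (by linarith), max_eq_right (by linarith)]
    ring
  · have : (k : ℝ) ≤ j := by exact_mod_cast not_lt.mp h
    rw [max_eq_left (by linarith), max_eq_left (by linarith)]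
    ring

lemma sum_range_four_mul_add_two {M : Type*} [AddCommMonoid M] (f : ℕ → M) (n : ℕ) :
    ∑ i ∈ Finset.range (4 * n + 2), f i =
      f 0 + f 1 +
        ∑ j ∈ Finset.range n, (f (4 * j + 2) + f (4 * j + 3) + f (4 * j + 4) + f (4 * j + 5)) := by
  induction n with
  | zero => simp [Finset.sum_range_succ]
  | succ n ih =>
    rw [show 4 * (n + 1) + 2 = 4 * n + 2 + 1 + 1 + 1 + 1 by ring]
    simp only [Finset.sum_range_succ, ih]
    simp only [add_assoc]

noncomputable def stepWeight (g : ℕ → ℝ) (i : ℕ) : ℝ :=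
  if i % 4 = 2 then 2 * (g (i / 4 + 1) - g (i / 4))
  else if i % 4 = 0 ∧ i ≠ 0 then -(2 * (g (i / 4) - g (i / 4 - 1))) else 0

lemma abs_stepWeight_le {g : ℕ → ℝ} (hg : ∀ j, |g (j + 1) - g j| ≤ 1 / 2) (i : ℕ) :
    |stepWeight g i| ≤ 1 := by
  unfold stepWeight
  split_ifs with _ h
  · rw [abs_mul, abs_two]; linarith [hg (i / 4)]
  · have hi : i / 4 = i / 4 - 1 + 1 := by omega
    rw [abs_neg, abs_mul, abs_two, hi, Nat.add_sub_cancel]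
    linarith [hg (i / 4 - 1)]
  · simp

lemma stepWeight_block (g h : ℕ → ℝ) (j : ℕ) :
    stepWeight g (4 * j + 2) * h (4 * j + 2) + stepWeight g (4 * j + 3) * h (4 * j + 3) +
        stepWeight g (4 * j + 4) * h (4 * j + 4) + stepWeight g (4 * j + 5) * h (4 * j + 5) =
      2 * (g (j + 1) - g j) * (h (4 * j + 2) - h (4 * j + 4)) := by
  have h2 : (4 * j + 2) / 4 = j := by omega
  have h4 : (4 * j + 4) / 4 = j + 1 := by omega
  simp (disch := omega) only [stepWeight, if_pos, if_neg, h2, h4, Nat.add_sub_cancel]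
  ring

lemma sum_stepWeight_mul_hiddenUnit (g : ℕ → ℝ) {k n : ℕ} (hk : k ≤ n) :
    ∑ i ∈ Finset.range (4 * n + 2), stepWeight g i * hiddenUnit k i = g k - g 0 := by
  have hpair (j : ℕ) : hiddenUnit k (4 * j + 2) - hiddenUnit k (4 * j + 4) =
      if j < k then 1 / 2 else 0 := by
    rw [show 4 * j + 2 = 2 * (2 * j + 1) by ring, show 4 * j + 4 = 2 * (2 * j + 2) by ring,
      hiddenUnit_two_mul, hiddenUnit_two_mul, ← max_zero_sub_half_sub_max_zero_sub]
    push_cast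
    ring_nf
  have h0 : stepWeight g 0 = 0 := by simp [stepWeight]
  have h1 : stepWeight g 1 = 0 := by simp [stepWeight]
  calc ∑ i ∈ Finset.range (4 * n + 2), stepWeight g i * hiddenUnit k i
      = ∑ j ∈ Finset.range n, if j < k then g (j + 1) - g j else 0 := by
        simp only [sum_range_four_mul_add_two, h0, h1, zero_mul, zero_add, stepWeight_block,
          hpair, mul_ite, mul_zero]
        refine Finset.sum_congr rfl fun j _ => ?_
        split_ifs <;> ring
    _ = ∑ j ∈ Finset.range k, (g (j + 1) - g j) := by
        rw [← Finset.sum_filter]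
        congr 1
        ext j
        simp only [Finset.mem_filter, Finset.mem_range]
        omega
    _ = g k - g 0 := Finset.sum_range_sub g k

noncomputable def target (A : Finset ℕ) (k : ℕ) : ℝ := if k ∈ A then 1 / 4 else -1 / 4

lemma abs_target (A : Finset ℕ) (k : ℕ) : |target A k| = 1 / 4 := by
  unfold target; split_ifs <;> norm_num

lemma abs_target_sub_target_le (A : Finset ℕ) (j k : ℕ) : |target A j - target A k| ≤ 1 / 2 :=
  calc |target A j - target A k| ≤ |target A j| + |target A k| := abs_sub _ _
    _ = 1 / 2 := by rw [abs_target, abs_target]; norm_num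

lemma fA_mul_target {n : ℕ} (A : Finset ℕ) (x : Fin n → Bool) :
    fA A x * target A (hw x) = 1 / 4 := by
  unfold fA target; split_ifs <;> norm_num

lemma hw_le {n : ℕ} (x : Fin n → Bool) : hw x ≤ n :=
  (Finset.card_filter_le _ _).trans_eq (Finset.card_fin n)

theorem stmt10_general (n : ℕ) (f : (Fin n → Bool) → ℝ)
    (hf : ∃ A : Finset ℕ, A ⊆ Finset.range (n + 1) ∧ f = fA A) :
    ∃ (M : Fin (4 * n + 2) → ℝ) (b : ℝ),
      (∀ i, M i ∈ Set.Icc (-1 : ℝ) 1) ∧ |b| ≤ (n : ℝ) + 1 ∧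
      ∀ x : Fin n → Bool, 0.25 ≤ f x * ((∑ i, M i * vX n x i) + b) := by
  obtain ⟨A, -, rfl⟩ := hf
  refine ⟨fun i => stepWeight (target A) i, target A 0,
    fun i => abs_le.mp (abs_stepWeight_le (fun j => abs_target_sub_target_le A _ _) i), ?_,
    fun x => ?_⟩
  · rw [abs_target]
    linarith [(n.cast_nonneg : (0 : ℝ) ≤ n)]
  · have hsum : ∑ i : Fin (4 * n + 2), stepWeight (target A) i * vX n x i =
        target A (hw x) - target A 0 := by
      simp only [vX_eq_hiddenUnit]
      rw [Fin.sum_univ_eq_sum_range (fun i => stepWeight (target A) i * hiddenUnit (hw x) i)]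
      exact sum_stepWeight_mul_hiddenUnit _ (hw_le x)
    rw [hsum, sub_add_cancel, fA_mul_target]
    norm_num

theorem stmt10 (n : ℕ) (hn : 1 ≤ n) (f : (Fin n → Bool) → ℝ)
    (hf : ∃ A : Finset ℕ, A ⊆ Finset.range (n + 1) ∧ f = fA A) :
    ∃ (M : Fin (4 * n + 2) → ℝ) (b : ℝ),
      (∀ i, M i ∈ Set.Icc (-1 : ℝ) 1) ∧ |b| ≤ (n : ℝ) + 1 ∧
      ∀ x : Fin n → Bool, 0.25 ≤ f x * ((∑ i, M i * vX n x i) + b) :=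
  stmt10_general n f hf
end

section
/- Every modified-perceptron run w(0), ..., w(T) satisfies T ≤ (2βh + (Rh)²)/(γh)². That is, the modified perceptron algorithm performs at most (2βh + (Rh)²)/(γh)² updates. -/
open scoped RealInnerProductSpace

/-- The modified perceptron algorithm performs at most (2βh + (Rh)²)/(γh)² updates. -/
theorem stmt14 (d : ℕ) (V : Finset (EuclideanSpace ℝ (Fin d))) (hV : V.Nonempty)
    (Y : EuclideanSpace ℝ (Fin d) → ℝ) (hY : ∀ v ∈ V, Y v = 1 ∨ Y v = -1)
    (R : ℝ) (hR₁ : ∀ v ∈ V, ‖v‖ ≤ R) (hR₂ : ∃ v ∈ V, ‖v‖ = R)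
    (wstar : EuclideanSpace ℝ (Fin d)) (hws : ‖wstar‖ = 1)
    (γ : ℝ) (hγ : 0 < γ) (hsep : ∀ v ∈ V, γ ≤ Y v * ⟪wstar, v⟫)
    (h β : ℝ) (hh : 0 < h) (hβ : 0 < β)
    (T : ℕ) (w : ℕ → EuclideanSpace ℝ (Fin d)) (hw0 : w 0 = 0)
    (hrun : ∀ s < T, ∃ v ∈ V,
      Y v * ⟪w s, v⟫ ≤ β ∧ w (s + 1) = w s + (h * Y v) • v) :
    (T : ℝ) ≤ (2 * β * h + (R * h) ^ 2) / (γ * h) ^ 2 := by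
  have hR0 : 0 ≤ R := by
    obtain ⟨v, _, hv⟩ := hR₂
    exact hv ▸ norm_nonneg v
  -- Lower bound on inner product
  have hA : ∀ s ≤ T, (s : ℝ) * (γ * h) ≤ ⟪wstar, w s⟫ := by
    intro s hs
    induction s with
    | zero => simp [hw0]
    | succ n ih =>
      have hn : n ≤ T := Nat.le_of_succ_le hs
      obtain ⟨v, hvV, hvβ, hvw⟩ := hrun n (Nat.lt_of_succ_le hs)
      have hsep' := hsep v hvV
      have : ⟪wstar, w (n+1)⟫ = ⟪wstar, w n⟫ + h * (Y v * ⟪wstar, v⟫) := by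
        rw [hvw, inner_add_right, real_inner_smul_right]; ring
      rw [this]
      push_cast
      have := ih hn
      nlinarith
  -- Upper bound on squared norm
  have hB : ∀ s ≤ T, ‖w s‖ ^ 2 ≤ (s : ℝ) * (2 * β * h + (R * h) ^ 2) := by
    intro s hs
    induction s with
    | zero => simp [hw0]
    | succ n ih =>
      have hn : n ≤ T := Nat.le_of_succ_le hs
      obtain ⟨v, hvV, hvβ, hvw⟩ := hrun n (Nat.lt_of_succ_le hs)
      have hY2 : (Y v) ^ 2 = 1 := by
        rcases hY v hvV with h1 | h1 <;> rw [h1] <;> norm_num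
      have hvR : ‖v‖ ≤ R := hR₁ v hvV
      have hexp : ‖w (n+1)‖ ^ 2
          = ‖w n‖ ^ 2 + 2 * (h * (Y v * ⟪w n, v⟫)) + h ^ 2 * (Y v) ^ 2 * ‖v‖ ^ 2 := by
        rw [hvw, norm_add_sq_real, real_inner_smul_right, norm_smul]
        simp only [Real.norm_eq_abs]
        rw [mul_pow, sq_abs]
        ring
      rw [hexp, hY2]
      push_cast
      have := ih hn
      nlinarith [mul_le_mul_of_nonneg_left hvβ hh.le, pow_le_pow_left₀ (norm_nonneg v) hvR 2, sq_nonneg h]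
  -- combine
  by_cases hT : T = 0
  · subst hT
    simp
    positivity
  have hA' := hA T le_rfl
  have hB' := hB T le_rfl
  have hCS : ⟪wstar, w T⟫ ≤ ‖w T‖ := by
    calc ⟪wstar, w T⟫ ≤ ‖wstar‖ * ‖w T‖ := real_inner_le_norm _ _
    _ = ‖w T‖ := by rw [hws, one_mul]
  have hTpos : (0 : ℝ) < T := by positivity
  have hγh : 0 < (γ * h) ^ 2 := by positivity
  rw [le_div_iff₀ hγh]
  have hkey : ((T : ℝ) * (γ * h)) ^ 2 ≤ (T : ℝ) * (2 * β * h + (R * h) ^ 2) := by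
    calc ((T : ℝ) * (γ * h)) ^ 2 ≤ ⟪wstar, w T⟫ ^ 2 := by
          have h1 : 0 ≤ (T : ℝ) * (γ * h) := by positivity
          exact pow_le_pow_left₀ h1 hA' 2
    _ ≤ ‖w T‖ ^ 2 := by
          have h2 : 0 ≤ ⟪wstar, w T⟫ := le_trans (by positivity) hA'
          exact pow_le_pow_left₀ h2 hCS 2
    _ ≤ (T : ℝ) * (2 * β * h + (R * h) ^ 2) := hB'
  nlinarith
end

section
/- Let w(0), ..., w(T) be a modified-perceptron run that has terminated, i.e., Y(v)·(w(T)·v) > β for all v ∈ V. Then for every v ∈ V, Y(v)·(w(T)·v) ≥ (γβh/(2βh + (Rh)²))·‖w(T)‖. That is, the output of the modified perceptron algorithm achieves a margin of at least γβh/(2βh + (Rh)²). -/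
open scoped RealInnerProductSpace

/-- The output of a terminated modified-perceptron run achieves a margin of at least
γβh/(2βh + (Rh)²). -/
theorem stmt15 (d : ℕ) (V : Finset (EuclideanSpace ℝ (Fin d))) (hV : V.Nonempty)
    (Y : EuclideanSpace ℝ (Fin d) → ℝ) (hY : ∀ v ∈ V, Y v = 1 ∨ Y v = -1)
    (R : ℝ) (hR₁ : ∀ v ∈ V, ‖v‖ ≤ R) (hR₂ : ∃ v ∈ V, ‖v‖ = R)
    (wstar : EuclideanSpace ℝ (Fin d)) (hws : ‖wstar‖ = 1)
    (γ : ℝ) (hγ : 0 < γ) (hsep : ∀ v ∈ V, γ ≤ Y v * ⟪wstar, v⟫)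
    (h β : ℝ) (hh : 0 < h) (hβ : 0 < β)
    (T : ℕ) (w : ℕ → EuclideanSpace ℝ (Fin d)) (hw0 : w 0 = 0)
    (hrun : ∀ s < T, ∃ v ∈ V,
      Y v * ⟪w s, v⟫ ≤ β ∧ w (s + 1) = w s + (h * Y v) • v)
    (hterm : ∀ v ∈ V, β < Y v * ⟪w T, v⟫) :
    ∀ v ∈ V, (γ * β * h / (2 * β * h + (R * h) ^ 2)) * ‖w T‖ ≤ Y v * ⟪w T, v⟫ := by
  intro v hv
  have hR0 : 0 ≤ R := by obtain ⟨u, _, hu⟩ := hR₂; rw [← hu]; positivity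
  set C : ℝ := 2 * h * β + h ^ 2 * R ^ 2 with hC
  have hCpos : 0 < C := by positivity
  have hA : ∀ t ≤ T, γ * h * t ≤ ⟪wstar, w t⟫ := by
    intro t ht
    induction t with
    | zero => simp [hw0]
    | succ s ih =>
      have hs : s < T := lt_of_lt_of_le (Nat.lt_succ_self s) ht
      obtain ⟨u, hu, hle, heq⟩ := hrun s hs
      have ihs := ih (le_of_lt hs)
      have hsep' := hsep u hu
      have hexp : ⟪wstar, w (s + 1)⟫ = ⟪wstar, w s⟫ + h * (Y u * ⟪wstar, u⟫) := by
        rw [heq, inner_add_right, real_inner_smul_right]; ring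
      rw [hexp]
      push_cast
      nlinarith
  have hB : ∀ t ≤ T, ‖w t‖ ^ 2 ≤ t * C := by
    intro t ht
    induction t with
    | zero => simp [hw0]
    | succ s ih =>
      have hs : s < T := lt_of_lt_of_le (Nat.lt_succ_self s) ht
      obtain ⟨u, hu, hle, heq⟩ := hrun s hs
      have ihs := ih (le_of_lt hs)
      have hY2 : (Y u) ^ 2 = 1 := by rcases hY u hu with h1 | h1 <;> rw [h1] <;> norm_num
      have hnu : ‖u‖ ^ 2 ≤ R ^ 2 := by
        have := hR₁ u hu; nlinarith [norm_nonneg u]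
      have hexp : ‖w (s + 1)‖ ^ 2
          = ‖w s‖ ^ 2 + 2 * ((h * Y u) * ⟪w s, u⟫) + (h * Y u) ^ 2 * ‖u‖ ^ 2 := by
        rw [heq, @norm_add_sq_real, real_inner_smul_right, norm_smul,
          Real.norm_eq_abs, mul_pow, sq_abs]
      have e1 : (h * Y u) ^ 2 = h ^ 2 := by rw [mul_pow, hY2, mul_one]
      have e2 : 2 * ((h * Y u) * ⟪w s, u⟫) = 2 * h * (Y u * ⟪w s, u⟫) := by ring
      rw [hexp, e1, e2]
      push_cast
      nlinarith [sq_nonneg h, mul_le_mul_of_nonneg_left hle (by positivity : (0:ℝ) ≤ 2 * h),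
        mul_le_mul_of_nonneg_left hnu (by positivity : (0:ℝ) ≤ h ^ 2)]
  have hAT := hA T le_rfl
  have hBT := hB T le_rfl
  have hiw : ⟪wstar, w T⟫ ≤ ‖w T‖ := by
    calc ⟪wstar, w T⟫ ≤ ‖wstar‖ * ‖w T‖ := real_inner_le_norm _ _
    _ = ‖w T‖ := by rw [hws, one_mul]
  have hterm' := hterm v hv
  rcases eq_or_lt_of_le (norm_nonneg (w T)) with h0 | h0
  · rw [← h0, mul_zero]; linarith
  · have hTN : γ * h * T ≤ ‖w T‖ := le_trans hAT hiw
    have hN : ‖w T‖ ≤ C / (γ * h) := by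
      rw [le_div_iff₀ (by positivity)]
      nlinarith [mul_le_mul_of_nonneg_right hBT (by positivity : (0:ℝ) ≤ γ * h),
        mul_le_mul_of_nonneg_right hTN hCpos.le]
    have hc : (γ * β * h / (2 * β * h + (R * h) ^ 2)) * (C / (γ * h)) = β := by
      have hd : 2 * β * h + (R * h) ^ 2 > 0 := by positivity
      rw [hC]; field_simp
    calc (γ * β * h / (2 * β * h + (R * h) ^ 2)) * ‖w T‖
        ≤ (γ * β * h / (2 * β * h + (R * h) ^ 2)) * (C / (γ * h)) :=
          mul_le_mul_of_nonneg_left hN (by positivity)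
      _ = β := hc
      _ ≤ Y v * ⟪w T, v⟫ := hterm'.le
end

section
/- Assume M(0) = 0, b(0) = 0, and that the initial embedding is linearly separable consistently with f with margin γ: there exist w* ∈ ℝ^ℓ and c* ∈ ℝ with ‖w*‖² + (c*)² = 1 and f(x)·(w*·ReLU(W(0)x + B(0)) + c*) ≥ γ for all x ∈ X. Let R_X = max_{x∈X} ‖x‖ and R = max_{x∈X} ‖(ReLU(W(0)x + B(0)), 1)‖, and assume R_X > 1, 0 < γ ≤ 1, 0 < h ≤ γ^{5/2}/(100·R²·R_X), and β = R²h. Then every SGD update sequence (W(t), B(t), M(t), b(t)), t = 0,...,T, satisfies: (i) T ≤ 20R²/γ² (training ends after at most 20R²/γ² updates); (ii) for every t ≤ T and every x ∈ X, ‖ReLU(W(t)x + B(t)) − ReLU(W(0)x + B(0))‖ ≤ 2√6·R_X²·h²·R·t^{3/2} (each embedded point moves a distance at most O(R_X² h² R t^{3/2})); and (iii) for every t ≤ T, ‖(M(t), b(t))‖ ≤ 2√3·R·h·√t. -/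
/-- Heaviside step function: H(ξ) = 1 if ξ > 0 and H(ξ) = 0 otherwise. -/
noncomputable def hside (ξ : ℝ) : ℝ := if 0 < ξ then 1 else 0

/-- Euclidean norm of a vector in ℝ^k. -/
noncomputable def vnorm {k : ℕ} (v : Fin k → ℝ) : ℝ := Real.sqrt (∑ i, (v i) ^ 2)

/-- Output of the two-layer ReLU network with parameters (W, B, M, b) on input x:
M·ReLU(Wx + B) + b. -/
noncomputable def netout {ℓ n : ℕ} (W : Matrix (Fin ℓ) (Fin n) ℝ) (B M : Fin ℓ → ℝ)
    (b : ℝ) (x : Fin n → Bool) : ℝ :=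
  (∑ i, M i * max 0 (W.mulVec (toR x) i + B i)) + b

/-- An SGD update sequence of length T for the hinge loss with confidence parameter β and
step size h, whose update examples are taken from `Sset` and labeled by f. -/
def SGDseq (n ℓ : ℕ) (f : (Fin n → Bool) → ℝ) (h β : ℝ) (Sset : Set (Fin n → Bool))
    (T : ℕ) (W : ℕ → Matrix (Fin ℓ) (Fin n) ℝ) (B M : ℕ → Fin ℓ → ℝ) (b : ℕ → ℝ) : Prop :=
  ∀ t < T, ∃ x ∈ Sset,
    f x * netout (W t) (B t) (M t) (b t) x ≤ β ∧
    W (t + 1) = (fun i j => W t i j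
      + f x * (M t i * hside ((W t).mulVec (toR x) i + B t i)) * toR x j * h) ∧
    B (t + 1) = (fun i => B t i
      + f x * (M t i * hside ((W t).mulVec (toR x) i + B t i)) * h) ∧
    M (t + 1) = (fun i => M t i + f x * max 0 ((W t).mulVec (toR x) i + B t i) * h) ∧
    b (t + 1) = b t + f x * h

lemma my_sq_le {a b : ℝ} (ha : 0 ≤ a) (hb : 0 ≤ b) (h : a^2 ≤ b^2) : a ≤ b := by
  calc a = Real.sqrt (a^2) := (Real.sqrt_sq ha).symm
  _ ≤ Real.sqrt (b^2) := Real.sqrt_le_sqrt h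
  _ = b := Real.sqrt_sq hb

lemma step32 (t : ℕ) : (t:ℝ)*Real.sqrt t + (3/2)*Real.sqrt t ≤ ((t:ℝ)+1)*Real.sqrt ((t:ℝ)+1) := by
  have h0 : (0:ℝ) ≤ t := Nat.cast_nonneg t
  have h1 : (0:ℝ) ≤ (t:ℝ)+1 := by linarith
  have hs : Real.sqrt t ^ 2 = (t:ℝ) := Real.sq_sqrt h0
  have hs1 : Real.sqrt ((t:ℝ)+1) ^ 2 = (t:ℝ)+1 := Real.sq_sqrt h1
  have hsn : 0 ≤ Real.sqrt (t:ℝ) := Real.sqrt_nonneg _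
  have hsn1 : 0 ≤ Real.sqrt ((t:ℝ)+1) := Real.sqrt_nonneg _
  apply my_sq_le (by positivity) (by positivity)
  have e1 : (((t:ℝ)+1)*Real.sqrt ((t:ℝ)+1))^2 = ((t:ℝ)+1)^3 := by
    rw [mul_pow, hs1]; ring
  have e2 : ((t:ℝ)*Real.sqrt t + (3/2)*Real.sqrt t)^2 = ((t:ℝ)+3/2)^2 * t := by
    have e : ((t:ℝ)*Real.sqrt t + (3/2)*Real.sqrt t)^2 = ((t:ℝ)+3/2)^2 * (Real.sqrt t)^2 := by ring
    rw [e, hs]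
  rw [e1, e2]; nlinarith [h0]

lemma mono_xsqrtx {a b : ℝ} (ha : 0 ≤ a) (hab : a ≤ b) : a * Real.sqrt a ≤ b * Real.sqrt b :=
  mul_le_mul hab (Real.sqrt_le_sqrt hab) (Real.sqrt_nonneg a) (le_trans ha hab)

lemma my_cs {k : ℕ} (u v : Fin k → ℝ) :
    (∑ i, u i * v i) ≤ Real.sqrt (∑ i, u i^2) * Real.sqrt (∑ i, v i^2) := by
  have h := Finset.sum_mul_sq_le_sq_mul_sq Finset.univ u v
  apply le_trans (le_abs_self _)
  rw [← Real.sqrt_sq_eq_abs]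
  apply le_trans (Real.sqrt_le_sqrt h)
  rw [Real.sqrt_mul (by positivity)]

lemma my_cs2 {k : ℕ} (u v : Fin k → ℝ) (a c : ℝ) :
    ((∑ i, u i * v i) + a*c)^2 ≤ ((∑ i, u i^2) + a^2) * ((∑ i, v i^2) + c^2) := by
  have h := Finset.sum_mul_sq_le_sq_mul_sq (Finset.univ : Finset (Fin (k+1)))
    (Fin.snoc u a) (Fin.snoc v c)
  simpa [Fin.sum_univ_castSucc] using h

lemma my_tri {k : ℕ} (w u : Fin k → ℝ) (c : ℝ) :
    Real.sqrt ((∑ i, w i^2) + c^2) ≤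
      Real.sqrt ((∑ i, u i^2) + c^2) + Real.sqrt (∑ i, (w i - u i)^2) := by
  set A := (∑ i, u i^2) + c^2 with hA
  set Bq := ∑ i, (w i - u i)^2 with hB
  have hA0 : 0 ≤ A := by positivity
  have hB0 : 0 ≤ Bq := by positivity
  have hcs : (∑ i, u i * (w i - u i)) ≤ Real.sqrt A * Real.sqrt Bq := by
    apply le_trans (my_cs u (fun i => w i - u i))
    apply mul_le_mul_of_nonneg_right _ (Real.sqrt_nonneg _)
    apply Real.sqrt_le_sqrt
    rw [hA]; nlinarith [sq_nonneg c]
  have key : (∑ i, w i^2) + c^2 ≤ (Real.sqrt A + Real.sqrt Bq)^2 := by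
    have hexp : (∑ i, w i^2) = (∑ i, u i^2) + 2*(∑ i, u i * (w i - u i)) + Bq := by
      rw [hB, Finset.mul_sum, ← Finset.sum_add_distrib, ← Finset.sum_add_distrib]
      exact Finset.sum_congr rfl (fun i _ => by ring)
    have hsqA : Real.sqrt A ^2 = A := Real.sq_sqrt hA0
    have hsqB : Real.sqrt Bq ^2 = Bq := Real.sq_sqrt hB0
    nlinarith [hcs]
  calc Real.sqrt ((∑ i, w i^2) + c^2) ≤ Real.sqrt ((Real.sqrt A + Real.sqrt Bq)^2) :=
        Real.sqrt_le_sqrt key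
  _ = _ := Real.sqrt_sq (by positivity)

lemma my_tri0 {k : ℕ} (w u : Fin k → ℝ) :
    Real.sqrt (∑ i, w i^2) ≤ Real.sqrt (∑ i, u i^2) + Real.sqrt (∑ i, (w i - u i)^2) := by
  have := my_tri w u 0
  simpa using this

lemma relu_sq (a d : ℝ) : (max 0 (a + d) - max 0 a)^2 ≤ d^2 := by
  have h1 : |max (a+d) 0 - max a 0| ≤ |(a+d) - a| := abs_max_sub_max_le_abs _ _ _
  have h2 : (max 0 (a + d) - max 0 a)^2 = |max (a+d) 0 - max a 0|^2 := by
    rw [sq_abs, max_comm (a+d) 0, max_comm a 0]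
  rw [h2]
  calc |max (a+d) 0 - max a 0|^2 ≤ |(a+d)-a|^2 := by
        apply pow_le_pow_left₀ (abs_nonneg _) h1
  _ = d^2 := by rw [sq_abs]; ring_nf

lemma rpow32 (t : ℕ) : ((t:ℝ))^((3:ℝ)/2) = t * Real.sqrt t := by
  rcases Nat.eq_zero_or_pos t with h|h
  · simp [h]
  · have ht : (0:ℝ) < t := by positivity
    rw [show (3:ℝ)/2 = 1 + 1/2 by norm_num, Real.rpow_add ht, Real.rpow_one,
      Real.sqrt_eq_rpow]

/-- The embedding ReLU(Wx+B). -/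
noncomputable def emb {ℓ n : ℕ} (W : Matrix (Fin ℓ) (Fin n) ℝ) (B : Fin ℓ → ℝ)
    (x : Fin n → Bool) : Fin ℓ → ℝ :=
  fun i => max 0 (W.mulVec (toR x) i + B i)

set_option maxHeartbeats 1000000 in
/-- Stability of SGD training (Lemma "embed"): with zero output-layer initialization and a
linearly separable initial embedding with margin γ, along every SGD update sequence
(with β = R²h and small step size h) the training ends within 20R²/γ² updates, each
embedded point moves at most 2√6·R_X²·h²·R·t^{3/2}, and ‖(M(t), b(t))‖ ≤ 2√3·R·h·√t.
Here R_X = max_{x ∈ {0,1}^n} ‖x‖ = √n and R = max_{x} ‖(ReLU(W(0)x + B(0)), 1)‖. -/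
theorem stmt18 (n ℓ : ℕ) (f : (Fin n → Bool) → ℝ) (hf : ∀ x, f x = 1 ∨ f x = -1)
    (W : ℕ → Matrix (Fin ℓ) (Fin n) ℝ) (B M : ℕ → Fin ℓ → ℝ) (b : ℕ → ℝ)
    (hM0 : M 0 = 0) (hb0 : b 0 = 0)
    (wstar : Fin ℓ → ℝ) (cstar : ℝ) (hunit : (∑ i, (wstar i) ^ 2) + cstar ^ 2 = 1)
    (γ : ℝ) (hγ0 : 0 < γ) (hγ1 : γ ≤ 1)
    (hsep : ∀ x : Fin n → Bool,
      γ ≤ f x * ((∑ i, wstar i * max 0 ((W 0).mulVec (toR x) i + B 0 i)) + cstar))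
    (hRX : (1 : ℝ) < Real.sqrt n)
    (R : ℝ)
    (hR₁ : ∀ x : Fin n → Bool,
      Real.sqrt ((∑ i, (max 0 ((W 0).mulVec (toR x) i + B 0 i)) ^ 2) + 1) ≤ R)
    (hR₂ : ∃ x : Fin n → Bool,
      Real.sqrt ((∑ i, (max 0 ((W 0).mulVec (toR x) i + B 0 i)) ^ 2) + 1) = R)
    (h β : ℝ) (hh0 : 0 < h)
    (hh : h ≤ γ ^ ((5 : ℝ) / 2) / (100 * R ^ 2 * Real.sqrt n))
    (hβ : β = R ^ 2 * h)
    (T : ℕ) (hrun : SGDseq n ℓ f h β Set.univ T W B M b) :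
    (T : ℝ) ≤ 20 * R ^ 2 / γ ^ 2 ∧
    (∀ t ≤ T, ∀ x : Fin n → Bool,
      vnorm (fun i => max 0 ((W t).mulVec (toR x) i + B t i)
          - max 0 ((W 0).mulVec (toR x) i + B 0 i)) ≤
        2 * Real.sqrt 6 * (Real.sqrt n) ^ 2 * h ^ 2 * R * (t : ℝ) ^ ((3 : ℝ) / 2)) ∧
    (∀ t ≤ T, Real.sqrt ((∑ i, (M t i) ^ 2) + (b t) ^ 2) ≤
      2 * Real.sqrt 3 * R * h * Real.sqrt t) := by
  -- basic facts
  have hR1 : (1:ℝ) ≤ R := by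
    have h0 := hR₁ (fun _ => false)
    have h1 : Real.sqrt 1 ≤ Real.sqrt ((∑ i, (max 0 ((W 0).mulVec (toR (fun _ => false)) i + B 0 i)) ^ 2) + 1) := by
      have hS0 : (0:ℝ) ≤ ∑ i, (max 0 ((W 0).mulVec (toR (fun _ => false)) i + B 0 i)) ^ 2 := by
        positivity
      apply Real.sqrt_le_sqrt; linarith
    rw [Real.sqrt_one] at h1; linarith
  have hR0 : (0:ℝ) < R := by linarith
  have hRn : (0:ℝ) ≤ R := hR0.le
  have hhn : (0:ℝ) ≤ h := hh0.le
  have hγn : (0:ℝ) ≤ γ := hγ0.le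
  have hsn : (0:ℝ) < Real.sqrt n := lt_trans one_pos hRX
  have hn2 : Real.sqrt n ^ 2 = (n:ℝ) := Real.sq_sqrt (Nat.cast_nonneg n)
  have hn1 : (1:ℝ) ≤ (n:ℝ) := by nlinarith
  have hn0 : (0:ℝ) < (n:ℝ) := by linarith
  have hγ2 : (0:ℝ) < γ^2 := by positivity
  have hγne : γ ≠ 0 := hγ0.ne'
  have hRne : R ≠ 0 := hR0.ne'
  have hnne : (n:ℝ) ≠ 0 := hn0.ne'
  have hy2 : ∀ x, f x ^ 2 = 1 := by intro x; rcases hf x with e|e <;> rw [e] <;> norm_num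
  have hyabs : ∀ (x : Fin n → Bool) (S : ℝ), -|S| ≤ f x * S := by
    intro x S; rcases hf x with e|e <;> rw [e]
    · simpa using neg_abs_le S
    · simpa using le_abs_self S
  have hh2 : h^2 ≤ γ^5 / (10000 * R^4 * (n:ℝ)) := by
    have hpow : (γ ^ ((5:ℝ)/2))^(2:ℕ) = γ^(5:ℕ) := by
      rw [← Real.rpow_natCast (γ ^ ((5:ℝ)/2)) 2, ← Real.rpow_mul hγ0.le,
        ← Real.rpow_natCast γ 5]
      norm_num
    have hQ : h^2 ≤ (γ ^ ((5:ℝ)/2) / (100 * R ^ 2 * Real.sqrt n))^2 :=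
      pow_le_pow_left₀ hhn hh 2
    have e : (γ ^ ((5:ℝ)/2) / (100 * R ^ 2 * Real.sqrt n))^2 = γ^5 / (10000 * R^4 * (n:ℝ)) := by
      rw [div_pow, hpow, mul_pow, mul_pow, hn2]
      norm_num; ring_nf
    rw [e] at hQ; exact hQ
  have h3sq : Real.sqrt 3 ^ 2 = 3 := Real.sq_sqrt (by norm_num)
  have hsqrt12 : ∀ s : ℝ, 0 ≤ s →
      Real.sqrt (12*R^2*h^2*s) = 2*Real.sqrt 3*R*h*Real.sqrt s := by
    intro s hs
    have hfac : (0:ℝ) ≤ 2*Real.sqrt 3*R*h :=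
      mul_nonneg (mul_nonneg (mul_nonneg (by norm_num) (Real.sqrt_nonneg 3)) hRn) hhn
    rw [show 12*R^2*h^2*s = (2*Real.sqrt 3*R*h)^2*s by
        rw [mul_pow, mul_pow, mul_pow, h3sq]; ring,
      Real.sqrt_mul (by positivity), Real.sqrt_sq hfac]
  -- the main induction
  have main : ∀ t : ℕ, t ≤ T →
      ((t:ℝ) ≤ 20*R^2/γ^2) ∧
      ((∑ i, (M t i)^2) + (b t)^2 ≤ 12*R^2*h^2*(t:ℝ)) ∧
      ((t:ℝ)*(h*(19/20*γ)) ≤ (∑ i, wstar i * M t i) + cstar * b t) ∧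
      (∀ x : Fin n → Bool,
        Real.sqrt (∑ i, (emb (W t) (B t) x i - emb (W 0) (B 0) x i)^2) ≤
          8*Real.sqrt 3/3 * ((n:ℝ)*(h^2*(R*((t:ℝ)*Real.sqrt (t:ℝ)))))) := by
    intro t
    induction t with
    | zero =>
      intro _
      refine ⟨by simp only [Nat.cast_zero]; positivity, by simp [hM0, hb0], by simp [hM0, hb0], ?_⟩
      intro x
      simp [emb]
    | succ t ih =>
      intro hsucc
      have htT : t < T := Nat.lt_of_succ_le hsucc
      obtain ⟨hTb, hN, hG, hD⟩ := ih (Nat.le_of_lt htT)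
      obtain ⟨x, -, hcond, hW', hB', hM', hb'⟩ := hrun t htT
      -- every embedded point is still close to its initialization
      have hA : (t:ℝ)*Real.sqrt (t:ℝ) ≤ (20*R^2/γ^2) * Real.sqrt (20*R^2/γ^2) :=
        mono_xsqrtx (Nat.cast_nonneg t) hTb
      have hAval : Real.sqrt (20*R^2/γ^2) = Real.sqrt 20 * (R/γ) := by
        rw [show 20*R^2/γ^2 = 20 * (R/γ)^2 by rw [div_pow]; ring,
          Real.sqrt_mul (by norm_num : (0:ℝ) ≤ 20), Real.sqrt_sq (by positivity)]
      have h60 : Real.sqrt 3 * Real.sqrt 20 ≤ 8 := by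
        rw [← Real.sqrt_mul (by norm_num : (0:ℝ) ≤ 3)]
        calc Real.sqrt ((3:ℝ)*20) ≤ Real.sqrt 64 := Real.sqrt_le_sqrt (by norm_num)
        _ = 8 := by rw [show (64:ℝ) = 8^2 by norm_num, Real.sqrt_sq (by norm_num)]
      have hsmall : ∀ x' : Fin n → Bool,
          Real.sqrt (∑ i, (emb (W t) (B t) x' i - emb (W 0) (B 0) x' i)^2) ≤ γ/20 := by
        intro x'
        refine le_trans (hD x') (le_trans ?_ (by linarith [mul_le_mul_of_nonneg_left hγ1 hγn] : γ^2/20 ≤ γ/20))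
        have hc83 : (0:ℝ) ≤ 8*Real.sqrt 3/3 := by positivity
        have htsn : (0:ℝ) ≤ (t:ℝ)*Real.sqrt (t:ℝ) :=
          mul_nonneg (Nat.cast_nonneg t) (Real.sqrt_nonneg _)
        calc 8*Real.sqrt 3/3 * ((n:ℝ)*(h^2*(R*((t:ℝ)*Real.sqrt (t:ℝ)))))
            ≤ 8*Real.sqrt 3/3 * ((n:ℝ)*((γ^5/(10000*R^4*(n:ℝ)))*(R*((20*R^2/γ^2) * Real.sqrt (20*R^2/γ^2))))) := by
              apply mul_le_mul_of_nonneg_left _ hc83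
              apply mul_le_mul_of_nonneg_left _ (Nat.cast_nonneg n)
              exact mul_le_mul hh2 (mul_le_mul_of_nonneg_left hA hRn)
                (mul_nonneg hRn htsn) (by positivity)
        _ = (160*(Real.sqrt 3*Real.sqrt 20)/30000) * γ^2 := by
              rw [hAval]; field_simp; ring
        _ ≤ γ^2/20 := by linarith [mul_le_mul_of_nonneg_right h60 (sq_nonneg γ)]
      -- bound on the current embedding of the update point
      have hvb : (∑ i, (emb (W t) (B t) x i)^2) + 1 ≤ 2*R^2 := by
        have ht1 : Real.sqrt ((∑ i, (emb (W t) (B t) x i)^2) + 1^2) ≤ R + γ/20 := by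
          refine le_trans (my_tri (emb (W t) (B t) x) (emb (W 0) (B 0) x) 1) ?_
          have h1 : Real.sqrt ((∑ i, (emb (W 0) (B 0) x i)^2) + 1^2) ≤ R := by
            simpa [emb] using hR₁ x
          exact add_le_add h1 (hsmall x)
        have h3 := Real.sq_sqrt
          (show (0:ℝ) ≤ (∑ i, (emb (W t) (B t) x i)^2) + 1^2 by positivity)
        have hγR : γ ≤ R := le_trans hγ1 hR1
        have h2'' : (∑ i, (emb (W t) (B t) x i)^2) + 1^2 ≤ (R + γ/20)^2 := by
          rw [← h3]
          exact pow_le_pow_left₀ (Real.sqrt_nonneg _) ht1 2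
        have hRg : (R + γ/20)^2 ≤ 2*R^2 := by
          linarith [mul_le_mul_of_nonneg_right hγR hRn, mul_le_mul_of_nonneg_right hγR hγn]
        linarith [h2'', hRg]
      -- norm recursion
      have hcond' : f x * ((∑ i, M t i * emb (W t) (B t) x i) + b t) ≤ R^2*h := by
        rw [hβ] at hcond; exact hcond
      have hexp : (∑ i, (M (t+1) i)^2) + (b (t+1))^2
          = ((∑ i, (M t i)^2) + (b t)^2)
            + 2*h*(f x * ((∑ i, M t i * emb (W t) (B t) x i) + b t))
            + h^2*(f x)^2*((∑ i, (emb (W t) (B t) x i)^2) + 1) := by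
        simp only [hM', hb', emb]
        rw [Finset.sum_congr rfl (fun i (_ : i ∈ Finset.univ) =>
          (by ring : (M t i + f x * max 0 ((W t).mulVec (toR x) i + B t i) * h)^2
            = (M t i)^2 + (2*h*f x) * (M t i * max 0 ((W t).mulVec (toR x) i + B t i))
              + (h^2*(f x)^2) * (max 0 ((W t).mulVec (toR x) i + B t i))^2)),
          Finset.sum_add_distrib, Finset.sum_add_distrib, ← Finset.mul_sum, ← Finset.mul_sum]
        ring
      have hNsucc : (∑ i, (M (t+1) i)^2) + (b (t+1))^2 ≤ 12*R^2*h^2*((t:ℝ)+1) := by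
        have c1 := mul_le_mul_of_nonneg_left hcond' (by positivity : (0:ℝ) ≤ 2*h)
        have c2 := mul_le_mul_of_nonneg_left hvb (sq_nonneg h)
        rw [hexp, hy2 x]
        have hp : (0:ℝ) ≤ R^2*h^2 := by positivity
        linarith [hN, c1, c2, hp]
      -- progress recursion
      have hGexp : (∑ i, wstar i * M (t+1) i) + cstar * b (t+1)
          = ((∑ i, wstar i * M t i) + cstar * b t)
            + h*(f x * ((∑ i, wstar i * emb (W t) (B t) x i) + cstar)) := by
        simp only [hM', hb', emb]
        rw [Finset.sum_congr rfl (fun i (_ : i ∈ Finset.univ) =>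
          (by ring : wstar i * (M t i + f x * max 0 ((W t).mulVec (toR x) i + B t i) * h)
            = wstar i * M t i
              + (h*f x) * (wstar i * max 0 ((W t).mulVec (toR x) i + B t i)))),
          Finset.sum_add_distrib, ← Finset.mul_sum]
        ring
      have hsepx : γ - γ/20 ≤ f x * ((∑ i, wstar i * emb (W t) (B t) x i) + cstar) := by
        have hd : (∑ i, wstar i * emb (W t) (B t) x i) - (∑ i, wstar i * emb (W 0) (B 0) x i)
            = ∑ i, wstar i * (emb (W t) (B t) x i - emb (W 0) (B 0) x i) := by
          rw [← Finset.sum_sub_distrib]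
          exact Finset.sum_congr rfl (fun i _ => by ring)
        set S := ∑ i, wstar i * (emb (W t) (B t) x i - emb (W 0) (B 0) x i) with hS
        have hw1 : Real.sqrt (∑ i, (wstar i)^2) ≤ 1 := by
          rw [show (1:ℝ) = Real.sqrt 1 by rw [Real.sqrt_one]]
          apply Real.sqrt_le_sqrt; nlinarith [sq_nonneg cstar]
        have hub : S ≤ γ/20 := by
          refine le_trans (my_cs wstar _) ?_
          calc Real.sqrt (∑ i, (wstar i)^2) *
                Real.sqrt (∑ i, (emb (W t) (B t) x i - emb (W 0) (B 0) x i)^2)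
              ≤ 1 * (γ/20) := mul_le_mul hw1 (hsmall x) (Real.sqrt_nonneg _) (by norm_num)
          _ = γ/20 := by ring
        have hlb : -S ≤ γ/20 := by
          have e : -S = ∑ i, wstar i * (emb (W 0) (B 0) x i - emb (W t) (B t) x i) := by
            rw [hS, ← Finset.sum_neg_distrib]
            exact Finset.sum_congr rfl (fun i _ => by ring)
          rw [e]
          refine le_trans (my_cs wstar _) ?_
          have e2 : (∑ i, (emb (W 0) (B 0) x i - emb (W t) (B t) x i)^2)
              = ∑ i, (emb (W t) (B t) x i - emb (W 0) (B 0) x i)^2 :=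
            Finset.sum_congr rfl (fun i _ => by ring)
          rw [e2]
          calc Real.sqrt (∑ i, (wstar i)^2) *
                Real.sqrt (∑ i, (emb (W t) (B t) x i - emb (W 0) (B 0) x i)^2)
              ≤ 1 * (γ/20) := mul_le_mul hw1 (hsmall x) (Real.sqrt_nonneg _) (by norm_num)
          _ = γ/20 := by ring
        have habs : |S| ≤ γ/20 := abs_le.2 ⟨by linarith, hub⟩
        have hlow := hyabs x S
        have hsep0' : γ ≤ f x * ((∑ i, wstar i * emb (W 0) (B 0) x i) + cstar) := by
          simpa [emb] using hsep x
        have efx : f x * ((∑ i, wstar i * emb (W t) (B t) x i) + cstar)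
            = f x * ((∑ i, wstar i * emb (W 0) (B 0) x i) + cstar) + f x * S := by
          linear_combination (f x) * hd
        rw [efx]
        have hfxS : -(γ/20) ≤ f x * S := le_trans (neg_le_neg habs) hlow
        linarith
      have hGsucc : ((t:ℝ)+1)*(h*(19/20*γ)) ≤ (∑ i, wstar i * M (t+1) i) + cstar * b (t+1) := by
        rw [hGexp]
        have hstep := mul_le_mul_of_nonneg_left hsepx hhn
        linarith [hG, hstep]
      -- bound on t+1
      have hGle : (∑ i, wstar i * M (t+1) i) + cstar * b (t+1)
          ≤ Real.sqrt ((∑ i, (M (t+1) i)^2) + (b (t+1))^2) := by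
        have hcs := my_cs2 wstar (M (t+1)) cstar (b (t+1))
        rw [hunit, one_mul] at hcs
        calc (∑ i, wstar i * M (t+1) i) + cstar * b (t+1)
            ≤ |(∑ i, wstar i * M (t+1) i) + cstar * b (t+1)| := le_abs_self _
        _ = Real.sqrt (((∑ i, wstar i * M (t+1) i) + cstar * b (t+1))^2) :=
            (Real.sqrt_sq_eq_abs _).symm
        _ ≤ Real.sqrt ((∑ i, (M (t+1) i)^2) + (b (t+1))^2) := Real.sqrt_le_sqrt hcs
      have hNsqrt : Real.sqrt ((∑ i, (M (t+1) i)^2) + (b (t+1))^2)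
          ≤ 2*Real.sqrt 3*R*h*Real.sqrt ((t:ℝ)+1) := by
        refine le_trans (Real.sqrt_le_sqrt hNsucc) ?_
        rw [hsqrt12 ((t:ℝ)+1) (by positivity)]
      have hTb1 : ((t:ℝ)+1) ≤ 20*R^2/γ^2 := by
        set s := Real.sqrt ((t:ℝ)+1) with hsdef
        have hs0 : (0:ℝ) < s := Real.sqrt_pos.2 (by positivity)
        have hs2 : s^2 = (t:ℝ)+1 := Real.sq_sqrt (by positivity)
        have key : ((t:ℝ)+1)*(h*(19/20*γ)) ≤ 2*Real.sqrt 3*R*h*s :=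
          le_trans hGsucc (le_trans hGle hNsqrt)
        have key2 : s*(19/20*γ) ≤ 2*Real.sqrt 3*R := by
          have e3 : h*(s*(s*(19/20*γ))) = ((t:ℝ)+1)*(h*(19/20*γ)) := by
            rw [← hs2]; ring
          have e4 : h*(s*(2*Real.sqrt 3*R)) = 2*Real.sqrt 3*R*h*s := by ring
          have hmul : h*(s*(s*(19/20*γ))) ≤ h*(s*(2*Real.sqrt 3*R)) := by
            rw [e3, e4]; exact key
          exact le_of_mul_le_mul_left (le_of_mul_le_mul_left hmul hh0) hs0
        have h3R : (2*Real.sqrt 3*R)*(2*Real.sqrt 3*R) = 12*R^2 := by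
          rw [show (2*Real.sqrt 3*R)*(2*Real.sqrt 3*R)
            = 4*(Real.sqrt 3^2)*R^2 by ring, h3sq]; ring
        have hsq := mul_le_mul key2 key2
          (mul_nonneg hs0.le (by positivity)) (by positivity)
        rw [h3R] at hsq
        rw [← hs2, le_div_iff₀ hγ2]
        linarith [hsq, sq_nonneg R]
      -- embedding movement
      have hW2 : W (t+1) = fun i j => W t i j
          + (f x * (M t i * hside ((W t).mulVec (toR x) i + B t i)) * h) * toR x j := by
        rw [hW']; funext i j; ring
      have hstep : ∀ x' : Fin n → Bool,
          Real.sqrt (∑ i, (emb (W (t+1)) (B (t+1)) x' i - emb (W t) (B t) x' i)^2)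
            ≤ 2*(n:ℝ)*h*(2*Real.sqrt 3*R*h*Real.sqrt (t:ℝ)) := by
        intro x'
        set ip := ∑ j, toR x j * toR x' j with hipdef
        have hip0 : (0:ℝ) ≤ ip := Finset.sum_nonneg (fun j _ =>
          mul_nonneg (by unfold toR; split_ifs <;> norm_num)
            (by unfold toR; split_ifs <;> norm_num))
        have hipn : ip ≤ (n:ℝ) := by
          rw [hipdef]
          calc (∑ j, toR x j * toR x' j) ≤ ∑ _j : Fin n, (1:ℝ) :=
                Finset.sum_le_sum (fun j _ => by
                  unfold toR; split_ifs <;> norm_num)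
          _ = (n:ℝ) := by simp
        have hWmul : ∀ i, (W (t+1)).mulVec (toR x') i
            = (W t).mulVec (toR x') i
              + (f x * (M t i * hside ((W t).mulVec (toR x) i + B t i)) * h) * ip := by
          intro i
          rw [hW2]
          simp only [Matrix.mulVec, dotProduct]
          rw [hipdef, Finset.mul_sum, ← Finset.sum_add_distrib]
          exact Finset.sum_congr rfl (fun j _ => by ring)
        have hinner : ∀ i, (W (t+1)).mulVec (toR x') i + B (t+1) i
            = ((W t).mulVec (toR x') i + B t i)
              + (f x * (M t i * hside ((W t).mulVec (toR x) i + B t i)) * h) * (ip + 1) := by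
          intro i
          rw [hWmul i]
          simp only [hB']
          ring
        have hsq : ∀ i : Fin ℓ, (emb (W (t+1)) (B (t+1)) x' i - emb (W t) (B t) x' i)^2
            ≤ h^2*(ip+1)^2*(M t i)^2 := by
          intro i
          have h1 := relu_sq ((W t).mulVec (toR x') i + B t i)
            ((f x * (M t i * hside ((W t).mulVec (toR x) i + B t i)) * h) * (ip + 1))
          simp only [emb]
          rw [hinner i]
          refine le_trans h1 ?_
          have hH2 : hside ((W t).mulVec (toR x) i + B t i)^2 ≤ 1 := by
            unfold hside; split_ifs <;> norm_num
          have hint := mul_le_mul_of_nonneg_left hH2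
            (show (0:ℝ) ≤ (M t i)^2*(h^2*(ip+1)^2) by positivity)
          rcases hf x with hfx|hfx <;> rw [hfx] <;> linarith [hint]
        have hsum : (∑ i, (emb (W (t+1)) (B (t+1)) x' i - emb (W t) (B t) x' i)^2)
            ≤ h^2*(2*(n:ℝ))^2*(12*R^2*h^2*(t:ℝ)) := by
          calc (∑ i, (emb (W (t+1)) (B (t+1)) x' i - emb (W t) (B t) x' i)^2)
              ≤ ∑ i, h^2*(ip+1)^2*(M t i)^2 := Finset.sum_le_sum (fun i _ => hsq i)
          _ = h^2*(ip+1)^2*(∑ i, (M t i)^2) := by rw [Finset.mul_sum]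
          _ ≤ h^2*(2*(n:ℝ))^2*(12*R^2*h^2*(t:ℝ)) := by
              have hMle : (∑ i, (M t i)^2) ≤ 12*R^2*h^2*(t:ℝ) := by
                linarith [hN, sq_nonneg (b t)]
              have hip1 : (ip+1)^2 ≤ (2*(n:ℝ))^2 := by
                linarith [mul_le_mul hipn hipn hip0 hn0.le,
                  mul_le_mul_of_nonneg_right hn1 hn0.le, hipn, hip0, hn1]
              have hs0 : (0:ℝ) ≤ ∑ i, (M t i)^2 := by positivity
              exact mul_le_mul (mul_le_mul_of_nonneg_left hip1 (sq_nonneg h)) hMle hs0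
                (by positivity)
        calc Real.sqrt (∑ i, (emb (W (t+1)) (B (t+1)) x' i - emb (W t) (B t) x' i)^2)
            ≤ Real.sqrt (h^2*(2*(n:ℝ))^2*(12*R^2*h^2*(t:ℝ))) := Real.sqrt_le_sqrt hsum
        _ = 2*(n:ℝ)*h*(2*Real.sqrt 3*R*h*Real.sqrt (t:ℝ)) := by
            rw [show h^2*(2*(n:ℝ))^2*(12*R^2*h^2*(t:ℝ))
                = (2*(n:ℝ)*h)^2 * (12*R^2*h^2*(t:ℝ)) by ring,
              Real.sqrt_mul (by positivity), Real.sqrt_sq (by positivity),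
              hsqrt12 (t:ℝ) (Nat.cast_nonneg t)]
      -- embedding bound at t+1
      have hDsucc : ∀ x' : Fin n → Bool,
          Real.sqrt (∑ i, (emb (W (t+1)) (B (t+1)) x' i - emb (W 0) (B 0) x' i)^2)
            ≤ 8*Real.sqrt 3/3 * ((n:ℝ)*(h^2*(R*(((t:ℝ)+1)*Real.sqrt ((t:ℝ)+1))))) := by
        intro x'
        have htri := my_tri0 (fun i => emb (W (t+1)) (B (t+1)) x' i - emb (W 0) (B 0) x' i)
          (fun i => emb (W t) (B t) x' i - emb (W 0) (B 0) x' i)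
        have e : (∑ i, ((emb (W (t+1)) (B (t+1)) x' i - emb (W 0) (B 0) x' i)
              - (emb (W t) (B t) x' i - emb (W 0) (B 0) x' i))^2)
            = ∑ i, (emb (W (t+1)) (B (t+1)) x' i - emb (W t) (B t) x' i)^2 :=
          Finset.sum_congr rfl (fun i _ => by ring)
        rw [e] at htri
        refine le_trans htri ?_
        refine le_trans (add_le_add (hD x') (hstep x')) ?_
        have e2 : 8*Real.sqrt 3/3 * ((n:ℝ)*(h^2*(R*((t:ℝ)*Real.sqrt (t:ℝ)))))
              + 2*(n:ℝ)*h*(2*Real.sqrt 3*R*h*Real.sqrt (t:ℝ))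
            = 8*Real.sqrt 3/3 * ((n:ℝ)*(h^2*(R*((t:ℝ)*Real.sqrt (t:ℝ)
              + (3/2)*Real.sqrt (t:ℝ))))) := by ring
        rw [e2]
        apply mul_le_mul_of_nonneg_left _ (by positivity : (0:ℝ) ≤ 8*Real.sqrt 3/3)
        apply mul_le_mul_of_nonneg_left _ (Nat.cast_nonneg n)
        apply mul_le_mul_of_nonneg_left _ (sq_nonneg h)
        exact mul_le_mul_of_nonneg_left (step32 t) hRn
      refine ⟨?_, ?_, ?_, ?_⟩
      · push_cast; exact hTb1
      · push_cast; exact hNsucc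
      · push_cast; exact hGsucc
      · intro x'; push_cast; exact hDsucc x'
  refine ⟨(main T le_rfl).1, ?_, ?_⟩
  · intro t htT x
    have hDt := (main t htT).2.2.2 x
    have h83 : 8*Real.sqrt 3/3 ≤ 2*Real.sqrt 6 := by
      apply my_sq_le (by positivity) (by positivity)
      rw [div_pow, mul_pow, mul_pow, Real.sq_sqrt (by norm_num : (0:ℝ) ≤ 3),
        Real.sq_sqrt (by norm_num : (0:ℝ) ≤ 6)]
      norm_num
    have hX0 : (0:ℝ) ≤ (n:ℝ)*(h^2*(R*((t:ℝ)*Real.sqrt (t:ℝ)))) :=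
      mul_nonneg (Nat.cast_nonneg n) (mul_nonneg (sq_nonneg h)
        (mul_nonneg hRn (mul_nonneg (Nat.cast_nonneg t) (Real.sqrt_nonneg _))))
    have hrw : (2:ℝ)*Real.sqrt 6*(Real.sqrt n)^2*h^2*R*((t:ℝ)^((3:ℝ)/2))
        = 2*Real.sqrt 6*((n:ℝ)*(h^2*(R*((t:ℝ)*Real.sqrt (t:ℝ))))) := by
      rw [rpow32, hn2]; ring
    calc vnorm (fun i => max 0 ((W t).mulVec (toR x) i + B t i)
          - max 0 ((W 0).mulVec (toR x) i + B 0 i))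
        = Real.sqrt (∑ i, (emb (W t) (B t) x i - emb (W 0) (B 0) x i)^2) := by
          simp only [vnorm, emb]
    _ ≤ 8*Real.sqrt 3/3 * ((n:ℝ)*(h^2*(R*((t:ℝ)*Real.sqrt (t:ℝ))))) := hDt
    _ ≤ 2*Real.sqrt 6*((n:ℝ)*(h^2*(R*((t:ℝ)*Real.sqrt (t:ℝ))))) :=
        mul_le_mul_of_nonneg_right h83 hX0
    _ = 2 * Real.sqrt 6 * (Real.sqrt n) ^ 2 * h ^ 2 * R * (t : ℝ) ^ ((3 : ℝ) / 2) := hrw.symm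
  · intro t htT
    have hNt := (main t htT).2.1
    refine le_trans (Real.sqrt_le_sqrt hNt) ?_
    rw [hsqrt12 (t:ℝ) (Nat.cast_nonneg t)]
end
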